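/- arXiv:2503.18146 — 4 statements merged into one kernel-verified Lean document; each statement's English description precedes it below -/
import Mathlib

section
/- Let 𝒱 be a volume-like class of real multivariate polynomials. Let n, m ∈ ℕ, κ ∈ ℕⁿ, l ∈ ℤ, and let T be a linear operator from ℝ_κ[w₁,…,wₙ] to real polynomials in m variables which is homogeneous of degree l, i.e. for every multi-index α with 0 ≤ α ≤ κ, T(w^α) is either zero or homogeneous of degree |α| + l. If the symbol Sym_T(w,u) = Σ_{0≤α≤κ} binom(κ,α) T(w^α) u^{κ−α} belongs to 𝒱, then for every homogeneous polynomial f ∈ ℝ_κ[w₁,…,wₙ] of some degree d with f ∈ 𝒱, the polynomial T(f) belongs to 𝒱 (and is homogeneous of degree d + l if nonzero). -/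
set_option linter.unusedSectionVars false
set_option maxHeartbeats 1000000


open MvPolynomial Finset

/-- A *volume-like class* of real multivariate polynomials: an assignment, to each finite set
of variables, of a collection of polynomials in those variables that is closed under
(i) products in disjoint sets of variables, (ii) positive scalars, (iii) substitutions
`x ↦ A x'` with nonnegative matrices `A`, (iv) the operators `Σ_{j≤k} ∂_u^j ∂_v^{k-j}` for
distinct variables `u, v`, and (v) contains all monomials. -/
structure VolumeLikeClass : Type 1 where
  Mem : ∀ {σ : Type} [Fintype σ] [DecidableEq σ], MvPolynomial σ ℝ → Prop
  mem_mul_disjoint : ∀ {σ τ : Type} [Fintype σ] [DecidableEq σ] [Fintype τ] [DecidableEq τ]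
      {f : MvPolynomial σ ℝ} {g : MvPolynomial τ ℝ}, Mem f → Mem g →
      Mem (rename Sum.inl f * rename Sum.inr g)
  mem_smul : ∀ {σ : Type} [Fintype σ] [DecidableEq σ] {c : ℝ} {f : MvPolynomial σ ℝ},
      0 < c → Mem f → Mem (c • f)
  mem_subst : ∀ {σ τ : Type} [Fintype σ] [DecidableEq σ] [Fintype τ] [DecidableEq τ]
      (A : σ → τ → ℝ), (∀ i j, 0 ≤ A i j) → ∀ {f : MvPolynomial σ ℝ}, Mem f →
      Mem (aeval (fun i => ∑ j, C (A i j) * X j) f)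
  mem_creationDeriv : ∀ {σ : Type} [Fintype σ] [DecidableEq σ] (u v : σ), u ≠ v → ∀ (k : ℕ)
      {f : MvPolynomial σ ℝ}, Mem f →
      Mem ((∑ j ∈ Finset.range (k + 1),
        ((pderiv u).toLinearMap : Module.End ℝ (MvPolynomial σ ℝ)) ^ j *
          ((pderiv v).toLinearMap : Module.End ℝ (MvPolynomial σ ℝ)) ^ (k - j)) f)
  mem_monomial : ∀ {σ : Type} [Fintype σ] [DecidableEq σ] (α : σ → ℕ), Mem (∏ i, X i ^ α i)

namespace SymAux

variable {σ : Type} [DecidableEq σ]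

noncomputable def Dop (u v : σ) (k : ℕ) : Module.End ℝ (MvPolynomial σ ℝ) :=
  ∑ j ∈ Finset.range (k + 1),
    ((pderiv u).toLinearMap : Module.End ℝ (MvPolynomial σ ℝ)) ^ j *
      ((pderiv v).toLinearMap : Module.End ℝ (MvPolynomial σ ℝ)) ^ (k - j)

noncomputable def Eop {ι : Type} (u w : ι → σ) (κ : ι → ℕ) :
    List ι → Module.End ℝ (MvPolynomial σ ℝ)
  | [] => 1
  | i :: L => Eop u w κ L * Dop (u i) (w i) (κ i)

lemma pderiv_X_pow_self (u : σ) (k : ℕ) :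
    pderiv u ((X u : MvPolynomial σ ℝ) ^ k) = (k : ℝ) • X u ^ (k - 1) := by
  rw [X_pow_eq_monomial, pderiv_monomial, X_pow_eq_monomial, smul_monomial,
    ← Finsupp.single_tsub]
  simp

lemma pderiv_X_pow_ne {u v : σ} (h : u ≠ v) (k : ℕ) :
    pderiv u ((X v : MvPolynomial σ ℝ) ^ k) = 0 := by
  rw [X_pow_eq_monomial, pderiv_monomial]
  simp [Finsupp.single_apply, h.symm]

lemma pd_pow_X (u : σ) (j a : ℕ) :
    (((pderiv u).toLinearMap : Module.End ℝ (MvPolynomial σ ℝ)) ^ j)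
        ((X u : MvPolynomial σ ℝ) ^ a)
      = (a.descFactorial j : ℝ) • X u ^ (a - j) := by
  induction j with
  | zero => simp
  | succ j ih =>
    rw [pow_succ', Module.End.mul_apply, ih, map_smul]
    have h1 : pderiv u ((X u : MvPolynomial σ ℝ) ^ (a - j))
        = ((a - j : ℕ) : ℝ) • X u ^ (a - j - 1) := pderiv_X_pow_self u (a - j)
    show (a.descFactorial j : ℝ) • pderiv u ((X u : MvPolynomial σ ℝ) ^ (a - j)) = _
    rw [h1, smul_smul]
    have h2 : a - j - 1 = a - (j + 1) := by omega
    have h3 : (a.descFactorial j : ℝ) * ((a - j : ℕ) : ℝ) = (a.descFactorial (j + 1) : ℝ) := by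
      rw [Nat.descFactorial_succ]; push_cast; ring
    rw [h2, h3]

lemma pd_pow_mul (u : σ) {p : MvPolynomial σ ℝ} (hp : pderiv u p = 0)
    (q : MvPolynomial σ ℝ) (j : ℕ) :
    (((pderiv u).toLinearMap : Module.End ℝ (MvPolynomial σ ℝ)) ^ j) (p * q)
      = p * (((pderiv u).toLinearMap : Module.End ℝ (MvPolynomial σ ℝ)) ^ j) q := by
  induction j generalizing q with
  | zero => simp
  | succ j ih =>
    rw [pow_succ, Module.End.mul_apply, Module.End.mul_apply]
    show (((pderiv u).toLinearMap : Module.End ℝ (MvPolynomial σ ℝ)) ^ j) (pderiv u (p * q)) = _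
    rw [pderiv_mul, hp, zero_mul, zero_add, ih]
    rfl

lemma pderiv_list_prod (v : σ) (M : List (MvPolynomial σ ℝ)) (h : ∀ q ∈ M, pderiv v q = 0) :
    pderiv v M.prod = 0 := by
  induction M with
  | nil => simp
  | cons q M ih =>
    rw [List.prod_cons, pderiv_mul, h q (by simp), ih fun r hr => h r (by simp [hr])]
    simp

lemma pderiv_rename_zero {τ : Type} [DecidableEq τ] {g : σ → τ} {u : τ} (hu : ∀ i, g i ≠ u)
    (p : MvPolynomial σ ℝ) : pderiv u (rename g p) = 0 := by
  induction p using MvPolynomial.induction_on with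
  | C a => simp
  | add p q hp hq => simp [hp, hq]
  | mul_X p i hp => rw [map_mul, rename_X, pderiv_mul, hp, pderiv_X_of_ne (hu i)]; simp

lemma sum_desc {S' : Type} [CommSemiring S'] [Algebra ℝ S'] (a b k : ℕ) (z : S') :
    ∑ j ∈ Finset.range (k + 1), (((b.descFactorial (k - j) : ℝ)) * (a.descFactorial j : ℝ)) •
        (z * ((0 : S') ^ (a - j) * (0 : S') ^ (b - (k - j))))
      = (if a + b = k then ((a.factorial : ℝ) * (b.factorial : ℝ)) else 0) • z := by
  have hterm : ∀ j ∈ Finset.range (k + 1),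
      (((b.descFactorial (k - j) : ℝ)) * (a.descFactorial j : ℝ)) •
          (z * ((0 : S') ^ (a - j) * (0 : S') ^ (b - (k - j))))
        = if j = a then (if k - a = b then ((a.factorial : ℝ) * (b.factorial : ℝ)) • z else 0)
          else 0 := by
    intro j hj
    by_cases h1 : j = a
    · subst h1
      by_cases h2 : k - j = b
      · rw [if_pos rfl, if_pos h2, h2, Nat.sub_self, Nat.sub_self]
        simp [Nat.descFactorial_self, mul_comm]
      · rw [if_pos rfl, if_neg h2]
        rcases Nat.lt_or_ge (k - j) b with hlt | hge
        · rw [zero_pow (show b - (k - j) ≠ 0 by omega)]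
          simp
        · have hz : b.descFactorial (k - j) = 0 := Nat.descFactorial_eq_zero_iff_lt.2 (by omega)
          rw [hz]; simp
    · rw [if_neg h1]
      rcases Nat.lt_or_ge j a with hlt | hge
      · rw [zero_pow (show a - j ≠ 0 by omega)]
        simp
      · have hz : a.descFactorial j = 0 := Nat.descFactorial_eq_zero_iff_lt.2 (by omega)
        rw [hz]; simp
  rw [Finset.sum_congr rfl hterm, Finset.sum_ite_eq' (Finset.range (k + 1)) a]
  by_cases hk : a + b = k
  · have ha : a ∈ Finset.range (k + 1) := Finset.mem_range.2 (by omega)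
    have hb : k - a = b := by omega
    rw [if_pos ha, if_pos hb, if_pos hk]
  · rw [if_neg hk, zero_smul]
    split_ifs with h1 h2
    · exfalso; rw [Finset.mem_range] at h1; omega
    · rfl
    · rfl

lemma main_eval {σ ι S' : Type} [DecidableEq σ] [CommSemiring S'] [Algebra ℝ S']
    (u w : ι → σ) (κ a b : ι → ℕ) (φ : σ → S')
    (hφu : ∀ i, φ (u i) = 0) (hφw : ∀ i, φ (w i) = 0)
    (L : List ι) : L.Nodup →
    (∀ i ∈ L, ∀ j ∈ L, u i ≠ w j) →
    (∀ i ∈ L, ∀ j ∈ L, i ≠ j → u i ≠ u j) →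
    (∀ i ∈ L, ∀ j ∈ L, i ≠ j → w i ≠ w j) →
    ∀ p : MvPolynomial σ ℝ, (∀ i ∈ L, pderiv (u i) p = 0 ∧ pderiv (w i) p = 0) →
    aeval φ (Eop u w κ L (p * (L.map fun i => X (u i) ^ a i * X (w i) ^ b i).prod))
      = (L.map fun i => if a i + b i = κ i then ((a i).factorial : ℝ) * ((b i).factorial : ℝ)
          else 0).prod • aeval φ p := by
  induction L with
  | nil => intro _ _ _ _ p hp; simp [Eop]
  | cons i L ih =>
    intro hnd huw hu hw p hp
    have hiL : i ∈ i :: L := List.mem_cons_self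
    have hmem : ∀ j ∈ L, j ∈ i :: L := fun j hj => List.mem_cons_of_mem i hj
    have hinL : i ∉ L := (List.nodup_cons.1 hnd).1
    have hpu : pderiv (u i) p = 0 := (hp i hiL).1
    have hpw : pderiv (w i) p = 0 := (hp i hiL).2
    set F : ι → MvPolynomial σ ℝ := fun j => X (u j) ^ a j * X (w j) ^ b j with hF
    have hprod_u : pderiv (u i) (L.map F).prod = 0 := by
      apply pderiv_list_prod
      intro r hr
      obtain ⟨j, hj, rfl⟩ := List.mem_map.1 hr
      have hij : i ≠ j := fun h => hinL (h ▸ hj)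
      rw [hF]
      rw [pderiv_mul, pderiv_X_pow_ne (hu i hiL j (hmem j hj) hij),
        pderiv_X_pow_ne (huw i hiL j (hmem j hj))]
      simp
    have hprod_w : pderiv (w i) (L.map F).prod = 0 := by
      apply pderiv_list_prod
      intro r hr
      obtain ⟨j, hj, rfl⟩ := List.mem_map.1 hr
      have hij : i ≠ j := fun h => hinL (h ▸ hj)
      rw [hF, pderiv_mul, pderiv_X_pow_ne (huw j (hmem j hj) i hiL).symm,
        pderiv_X_pow_ne (hw i hiL j (hmem j hj) hij)]
      simp
    have hq_w : pderiv (w i) ((p * (L.map F).prod) * X (u i) ^ a i) = 0 := by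
      rw [pderiv_mul, pderiv_mul, hpw, hprod_w, pderiv_X_pow_ne (huw i hiL i hiL).symm]
      simp
    have harr : p * (F i * (L.map F).prod)
        = ((p * (L.map F).prod) * X (u i) ^ a i) * X (w i) ^ b i := by rw [hF]; ring
    have hDop : Dop (u i) (w i) (κ i) (p * (F i * (L.map F).prod))
        = ∑ j ∈ Finset.range (κ i + 1),
            (((b i).descFactorial (κ i - j) : ℝ) * ((a i).descFactorial j : ℝ)) •
              ((p * (X (u i) ^ (a i - j) * X (w i) ^ (b i - (κ i - j)))) * (L.map F).prod) := by
      rw [harr, Dop, LinearMap.sum_apply]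
      refine Finset.sum_congr rfl fun j hj => ?_
      rw [Module.End.mul_apply, pd_pow_mul (w i) hq_w, pd_pow_X, mul_smul_comm, map_smul]
      have hrearr : ((p * (L.map F).prod) * X (u i) ^ a i) * X (w i) ^ (b i - (κ i - j))
          = (p * (X (w i) ^ (b i - (κ i - j)) * (L.map F).prod)) * X (u i) ^ a i := by ring
      rw [hrearr]
      have hq_u : pderiv (u i) (p * (X (w i) ^ (b i - (κ i - j)) * (L.map F).prod)) = 0 := by
        rw [pderiv_mul, pderiv_mul, hpu, hprod_u, pderiv_X_pow_ne (huw i hiL i hiL)]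
        simp
      rw [pd_pow_mul (u i) hq_u, pd_pow_X, mul_smul_comm, smul_smul]
      congr 1
      ring
    have hEop : Eop u w κ (i :: L) = Eop u w κ L * Dop (u i) (w i) (κ i) := rfl
    rw [List.map_cons, List.prod_cons, hEop, Module.End.mul_apply, hDop, map_sum, map_sum]
    simp only [map_smul]
    have hIH : ∀ j : ℕ,
        aeval φ (Eop u w κ L
          ((p * (X (u i) ^ (a i - j) * X (w i) ^ (b i - (κ i - j)))) * (L.map F).prod))
        = (L.map fun i' => if a i' + b i' = κ i'
              then ((a i').factorial : ℝ) * ((b i').factorial : ℝ) else 0).prod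
            • (aeval φ p * ((0 : S') ^ (a i - j) * (0 : S') ^ (b i - (κ i - j)))) := by
      intro j
      have hp' : ∀ i' ∈ L,
          pderiv (u i') (p * (X (u i) ^ (a i - j) * X (w i) ^ (b i - (κ i - j)))) = 0 ∧
          pderiv (w i') (p * (X (u i) ^ (a i - j) * X (w i) ^ (b i - (κ i - j)))) = 0 := by
        intro i' hi'
        have hii' : i ≠ i' := fun h => hinL (h ▸ hi')
        constructor
        · rw [pderiv_mul, pderiv_mul, (hp i' (hmem i' hi')).1,
            pderiv_X_pow_ne (hu i' (hmem i' hi') i hiL hii'.symm),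
            pderiv_X_pow_ne (huw i' (hmem i' hi') i hiL)]
          simp
        · rw [pderiv_mul, pderiv_mul, (hp i' (hmem i' hi')).2,
            pderiv_X_pow_ne (huw i hiL i' (hmem i' hi')).symm,
            pderiv_X_pow_ne (hw i' (hmem i' hi') i hiL hii'.symm)]
          simp
      rw [ih hnd.of_cons
        (fun i1 h1 j1 h2 => huw i1 (hmem i1 h1) j1 (hmem j1 h2))
        (fun i1 h1 j1 h2 hne => hu i1 (hmem i1 h1) j1 (hmem j1 h2) hne)
        (fun i1 h1 j1 h2 hne => hw i1 (hmem i1 h1) j1 (hmem j1 h2) hne)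
        _ hp']
      congr 1
      rw [map_mul, map_mul, map_pow, map_pow, aeval_X, aeval_X, hφu, hφw]
    rw [Finset.sum_congr rfl fun j _ => by rw [hIH j]]
    rw [Finset.sum_congr rfl fun j _ => smul_comm _ _ _]
    rw [← Finset.smul_sum, sum_desc (a i) (b i) (κ i) (aeval φ p), smul_smul, mul_comm,
      List.map_cons, List.prod_cons]

lemma mem_Eop (V : VolumeLikeClass) {σ : Type} [Fintype σ] [DecidableEq σ] {ι : Type}
    (u w : ι → σ) (κ : ι → ℕ) (L : List ι) (h : ∀ i ∈ L, u i ≠ w i)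
    {g : MvPolynomial σ ℝ} (hg : V.Mem g) : V.Mem (Eop u w κ L g) := by
  induction L generalizing g with
  | nil => simpa [Eop] using hg
  | cons i L ih =>
    have heq : Eop u w κ (i :: L) g = Eop u w κ L (Dop (u i) (w i) (κ i) g) := rfl
    rw [heq]
    exact ih (fun j hj => h j (List.mem_cons_of_mem i hj))
      (V.mem_creationDeriv (u i) (w i) (h i (List.mem_cons_self)) (κ i) hg)

end SymAux

open SymAux in
/-- **Theorem (symbol criterion).** Let `𝒱` be a volume-like class, `T` a linear operator from
`ℝ_κ[w₁,…,wₙ]` to polynomials in `m` variables, homogeneous of degree `l` (each `T(w^α)` is zero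
or homogeneous of degree `|α| + l`).  If the symbol
`Sym_T(w,u) = Σ_{0≤α≤κ} binom(κ,α) T(w^α) u^{κ−α}` belongs to `𝒱`, then for every homogeneous
`f ∈ ℝ_κ[w]` of degree `d` belonging to `𝒱`, the polynomial `T(f)` belongs to `𝒱` (and is
homogeneous of degree `d + l` if nonzero). -/
theorem symbol_criterion (V : VolumeLikeClass) (n m : ℕ) (κ : Fin n → ℕ) (l : ℤ)
    (T : MvPolynomial (Fin n) ℝ →ₗ[ℝ] MvPolynomial (Fin m) ℝ)
    (hThom : ∀ α ∈ Finset.Iic κ, T (∏ i, X i ^ α i) = 0 ∨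
      ∃ e : ℕ, (e : ℤ) = ((∑ i, α i : ℕ) : ℤ) + l ∧ (T (∏ i, X i ^ α i)).IsHomogeneous e)
    (hsym : V.Mem (∑ α ∈ Finset.Iic κ, (∏ i, ((κ i).choose (α i) : ℝ)) •
      (rename Sum.inl (T (∏ i, X i ^ α i)) *
        ∏ i, (X (Sum.inr i) : MvPolynomial (Fin m ⊕ Fin n) ℝ) ^ (κ i - α i))))
    (f : MvPolynomial (Fin n) ℝ) (d : ℕ) (hf : f.IsHomogeneous d)
    (hdeg : ∀ i, degreeOf i f ≤ κ i) (hfV : V.Mem f) :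
    V.Mem (T f) ∧
      (T f = 0 ∨ ∃ e : ℕ, (e : ℤ) = (d : ℤ) + l ∧ (T f).IsHomogeneous e) := by
  set S := Finset.Iic κ with hSdef
  set c : (Fin n → ℕ) → ℝ := fun α => coeff (Finsupp.equivFunOnFinite.symm α) f with hcdef
  have hsupp : ∀ v ∈ f.support, (⇑v : Fin n → ℕ) ∈ S := by
    intro v hv
    rw [hSdef, Finset.mem_Iic]
    intro i
    calc v i ≤ degreeOf i f := by rw [degreeOf_eq_sup]; exact Finset.le_sup (f := fun m => m i) hv
      _ ≤ κ i := hdeg i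
  have hαleκ : ∀ α ∈ S, ∀ i, α i ≤ κ i := by
    intro α hα i
    rw [hSdef, Finset.mem_Iic] at hα
    exact hα i
  have hmono : ∀ α : Fin n → ℕ,
      (∏ i, (X i : MvPolynomial (Fin n) ℝ) ^ α i)
        = monomial (Finsupp.equivFunOnFinite.symm α) 1 := by
    intro α
    rw [← prod_X_pow_eq_monomial]
    rw [show (∏ i, (X i : MvPolynomial (Fin n) ℝ) ^ α i)
      = ∏ i, X i ^ ((Finsupp.equivFunOnFinite.symm α) i) from by simp]
    exact (Finset.prod_subset (Finset.subset_univ _) (fun i _ hi => by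
      rw [Finsupp.notMem_support_iff.1 hi, pow_zero])).symm
  have hexp : f = ∑ α ∈ S, c α • ∏ i, (X i : MvPolynomial (Fin n) ℝ) ^ α i := by
    have h1 : ∀ α : Fin n → ℕ, c α • ∏ i, (X i : MvPolynomial (Fin n) ℝ) ^ α i
        = monomial (Finsupp.equivFunOnFinite.symm α) (coeff (Finsupp.equivFunOnFinite.symm α) f) := by
      intro α; rw [hmono α, smul_monomial, smul_eq_mul, mul_one, hcdef]
    calc f = ∑ v ∈ f.support, monomial v (coeff v f) := as_sum f
      _ = ∑ v ∈ S.image (fun α => Finsupp.equivFunOnFinite.symm α), monomial v (coeff v f) := by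
          refine Finset.sum_subset ?_ ?_
          · intro v hv
            exact Finset.mem_image.2 ⟨⇑v, hsupp v hv, by simp⟩
          · intro v _ hv
            rw [MvPolynomial.notMem_support_iff.1 hv, monomial_zero]
      _ = ∑ α ∈ S, monomial (Finsupp.equivFunOnFinite.symm α)
            (coeff (Finsupp.equivFunOnFinite.symm α) f) := by
          rw [Finset.sum_image (fun x _ y _ h => Finsupp.equivFunOnFinite.symm.injective h)]
      _ = _ := by rw [Finset.sum_congr rfl fun α _ => (h1 α).symm]
  have hT : T f = ∑ α ∈ S, c α • T (∏ i, X i ^ α i) := by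
    conv_lhs => rw [hexp]
    rw [map_sum]
    simp only [map_smul]
  have hdeg' : ∀ α ∈ S, c α ≠ 0 → (∑ i, α i) = d := by
    intro α hα hcα
    have hcoeff : coeff (Finsupp.equivFunOnFinite.symm α) f ≠ 0 := by
      rw [hcdef] at hcα; exact hcα
    have h0 := hf hcoeff
    rw [show (Finsupp.weight (1 : Fin n → ℕ)) = Finsupp.weight (fun _ => 1) from rfl,
      ← Finsupp.degree_eq_weight_one] at h0
    have h2 : (Finsupp.equivFunOnFinite.symm α).degree = ∑ i, α i := by
      rw [Finsupp.degree_apply]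
      rw [Finset.sum_subset (Finset.subset_univ _)
        (fun i _ hi => Finsupp.notMem_support_iff.1 hi)]
      simp
    rw [h2] at h0
    exact h0
  have hpart2 : T f = 0 ∨ ∃ e : ℕ, (e : ℤ) = (d : ℤ) + l ∧ (T f).IsHomogeneous e := by
    by_cases hE : ∃ e : ℕ, (e : ℤ) = (d : ℤ) + l
    · obtain ⟨e, he⟩ := hE
      right
      refine ⟨e, he, ?_⟩
      rw [hT]
      apply MvPolynomial.IsHomogeneous.sum
      intro α hα
      by_cases hcα : c α = 0
      · rw [hcα, zero_smul]; exact isHomogeneous_zero _ _ _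
      · rcases hThom α hα with h0 | ⟨e', he', hhom⟩
        · rw [h0, smul_zero]; exact isHomogeneous_zero _ _ _
        · have hee : e' = e := by
            rw [hdeg' α hα hcα] at he'
            omega
          rw [← hee]
          exact (mem_homogeneousSubmodule _ _).1
            ((homogeneousSubmodule (Fin m) ℝ e').smul_mem (c α)
              ((mem_homogeneousSubmodule _ _).2 hhom))
    · left
      rw [hT]
      apply Finset.sum_eq_zero
      intro α hα
      by_cases hcα : c α = 0
      · rw [hcα, zero_smul]
      · rcases hThom α hα with h0 | ⟨e', he', _⟩
        · rw [h0, smul_zero]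
        · exact absurd ⟨e', by rw [hdeg' α hα hcα] at he'; exact he'⟩ hE
  refine ⟨?_, hpart2⟩
  -- Part 1: membership
  set uv : Fin n → (Fin m ⊕ Fin n) ⊕ Fin n := fun i => Sum.inl (Sum.inr i) with huvdef
  set wv : Fin n → (Fin m ⊕ Fin n) ⊕ Fin n := fun i => Sum.inr i with hwvdef
  set ix : Fin m → (Fin m ⊕ Fin n) ⊕ Fin n := fun j => Sum.inl (Sum.inl j) with hixdef
  set ph : (Fin m ⊕ Fin n) ⊕ Fin n → MvPolynomial (Fin m) ℝ :=
    Sum.elim (Sum.elim X fun _ => 0) fun _ => 0 with hphdef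
  set Sym : MvPolynomial (Fin m ⊕ Fin n) ℝ := ∑ α ∈ S, (∏ i, ((κ i).choose (α i) : ℝ)) •
      (rename Sum.inl (T (∏ i, X i ^ α i)) *
        ∏ i, (X (Sum.inr i) : MvPolynomial (Fin m ⊕ Fin n) ℝ) ^ (κ i - α i)) with hSymdef
  have hPmem : V.Mem (rename Sum.inl Sym * rename Sum.inr f) := V.mem_mul_disjoint hsym hfV
  have hEmem : V.Mem (Eop uv wv κ (List.finRange n) (rename Sum.inl Sym * rename Sum.inr f)) :=
    mem_Eop V uv wv κ (List.finRange n) (fun i _ => by simp [huvdef, hwvdef]) hPmem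
  set A : ((Fin m ⊕ Fin n) ⊕ Fin n) → Fin m → ℝ :=
    Sum.elim (Sum.elim (fun j' j => if j' = j then (1 : ℝ) else 0) fun _ _ => 0)
      fun _ _ => 0 with hAdef
  have hAnn : ∀ s j, 0 ≤ A s j := by
    rintro ((j' | i) | i) j
    · by_cases h : j' = j <;> simp [hAdef, h]
    · simp [hAdef]
    · simp [hAdef]
  have hsubst := V.mem_subst A hAnn hEmem
  have hpheq : (fun s => ∑ j, (C (A s j) * X j : MvPolynomial (Fin m) ℝ)) = ph := by
    funext s
    rcases s with (j' | i) | i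
    · rw [hphdef]
      have hterm : ∀ j : Fin m, (C (A (Sum.inl (Sum.inl j')) j) * X j : MvPolynomial (Fin m) ℝ)
          = if j' = j then X j else 0 := by
        intro j
        rw [hAdef]
        simp only [Sum.elim_inl]
        split_ifs <;> simp
      rw [Finset.sum_congr rfl fun j _ => hterm j, Finset.sum_ite_eq]
      simp
    · rw [hphdef]; simp [hAdef]
    · rw [hphdef]; simp [hAdef]
  rw [hpheq] at hsubst
  -- expansion of the product polynomial
  have hPexp : rename Sum.inl Sym * rename Sum.inr f
      = ∑ α ∈ S, ∑ β ∈ S, ((∏ i, ((κ i).choose (α i) : ℝ)) * c β) •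
          (rename ix (T (∏ i, X i ^ α i)) *
            ((List.finRange n).map fun i => X (uv i) ^ (κ i - α i) * X (wv i) ^ β i).prod) := by
    have h1 : rename (Sum.inl : (Fin m ⊕ Fin n) → (Fin m ⊕ Fin n) ⊕ Fin n) Sym
        = ∑ α ∈ S, (∏ i, ((κ i).choose (α i) : ℝ)) •
            (rename ix (T (∏ i, X i ^ α i)) * ∏ i, X (uv i) ^ (κ i - α i)) := by
      rw [hSymdef, map_sum]
      refine Finset.sum_congr rfl fun α hα => ?_
      rw [map_smul, map_mul, rename_rename]
      congr 2
      rw [map_prod]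
      simp only [map_pow, rename_X]
      rfl
    have h2 : rename (Sum.inr : Fin n → (Fin m ⊕ Fin n) ⊕ Fin n) f
        = ∑ β ∈ S, c β • ∏ i, X (wv i) ^ β i := by
      conv_lhs => rw [hexp]
      rw [map_sum]
      refine Finset.sum_congr rfl fun β hβ => ?_
      rw [map_smul]
      congr 1
      rw [map_prod]
      simp only [map_pow, rename_X]
      rfl
    rw [h1, h2, Finset.sum_mul_sum]
    refine Finset.sum_congr rfl fun α hα => Finset.sum_congr rfl fun β hβ => ?_
    rw [smul_mul_smul_comm]
    congr 1
    rw [mul_assoc, ← Finset.prod_mul_distrib]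
    congr 1
  -- evaluation of each term
  have hmain : ∀ α ∈ S, ∀ β : Fin n → ℕ,
      aeval ph (Eop uv wv κ (List.finRange n) (rename ix (T (∏ i, X i ^ α i)) *
          ((List.finRange n).map fun i => X (uv i) ^ (κ i - α i) * X (wv i) ^ β i).prod))
      = (if β = α then ∏ i, (((κ i - α i).factorial : ℝ) * ((α i).factorial : ℝ)) else 0) •
          T (∏ i, X i ^ α i) := by
    intro α hα β
    have hres := main_eval uv wv κ (fun i => κ i - α i) β ph
      (fun i => by simp [huvdef, hphdef]) (fun i => by simp [hwvdef, hphdef])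
      (List.finRange n) (List.nodup_finRange n)
      (fun i _ j _ => by simp [huvdef, hwvdef])
      (fun i _ j _ hij => by simp [huvdef]; exact hij)
      (fun i _ j _ hij => by simp [hwvdef]; exact hij)
      (rename ix (T (∏ i, X i ^ α i)))
      (fun i _ => ⟨pderiv_rename_zero (fun j => by simp [hixdef, huvdef]) _,
        pderiv_rename_zero (fun j => by simp [hixdef, hwvdef]) _⟩)
    rw [hres]
    have haev : aeval ph (rename ix (T (∏ i, X i ^ α i))) = T (∏ i, X i ^ α i) := by
      rw [aeval_rename]
      have hcomp : ph ∘ ix = X := by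
        funext j; simp [hphdef, hixdef]
      rw [hcomp, aeval_X_left_apply]
    rw [haev]
    congr 1
    rw [← Fin.prod_univ_def]
    by_cases hβ : β = α
    · subst hβ
      rw [if_pos rfl]
      refine Finset.prod_congr rfl fun i _ => ?_
      rw [if_pos (Nat.sub_add_cancel (hαleκ β hα i))]
    · rw [if_neg hβ]
      obtain ⟨i0, hi0⟩ := Function.ne_iff.1 hβ
      refine Finset.prod_eq_zero (Finset.mem_univ i0) ?_
      rw [if_neg (fun h => hi0 (by
        have h' : κ i0 - α i0 + β i0 = κ i0 := h
        have h2 := hαleκ α hα i0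
        omega))]
  -- the key identity
  have hkey : aeval ph (Eop uv wv κ (List.finRange n) (rename Sum.inl Sym * rename Sum.inr f))
      = (∏ i, ((κ i).factorial : ℝ)) • T f := by
    rw [hPexp]
    simp only [map_sum, map_smul]
    have hinner : ∀ α ∈ S,
        (∑ β ∈ S, ((∏ i, ((κ i).choose (α i) : ℝ)) * c β) •
          aeval ph (Eop uv wv κ (List.finRange n) (rename ix (T (∏ i, X i ^ α i)) *
            ((List.finRange n).map fun i => X (uv i) ^ (κ i - α i) * X (wv i) ^ β i).prod)))
        = (∏ i, ((κ i).factorial : ℝ)) • (c α • T (∏ i, X i ^ α i)) := by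
      intro α hα
      have hterm : ∀ β ∈ S, ((∏ i, ((κ i).choose (α i) : ℝ)) * c β) •
          aeval ph (Eop uv wv κ (List.finRange n) (rename ix (T (∏ i, X i ^ α i)) *
            ((List.finRange n).map fun i => X (uv i) ^ (κ i - α i) * X (wv i) ^ β i).prod))
          = if β = α then (((∏ i, ((κ i).choose (α i) : ℝ)) * c β) *
              (∏ i, (((κ i - α i).factorial : ℝ) * ((α i).factorial : ℝ)))) •
                T (∏ i, X i ^ α i) else 0 := by
        intro β hβ
        rw [hmain α hα β]
        split_ifs with h
        · rw [smul_smul]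
        · rw [zero_smul, smul_zero]
      rw [Finset.sum_congr rfl hterm, Finset.sum_ite_eq' S α, if_pos hα]
      have hbk : (∏ i, ((κ i).choose (α i) : ℝ)) *
          (∏ i, (((κ i - α i).factorial : ℝ) * ((α i).factorial : ℝ)))
          = ∏ i, ((κ i).factorial : ℝ) := by
        rw [← Finset.prod_mul_distrib]
        refine Finset.prod_congr rfl fun i _ => ?_
        have h := Nat.choose_mul_factorial_mul_factorial (hαleκ α hα i)
        rw [show ((κ i).factorial : ℝ)
          = (((κ i).choose (α i) * (α i).factorial * (κ i - α i).factorial : ℕ) : ℝ) from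
            by rw [h]]
        push_cast
        ring
      rw [mul_comm (∏ i, ((κ i).choose (α i) : ℝ)) (c α), mul_assoc, hbk, mul_comm, mul_smul]
    rw [Finset.sum_congr rfl hinner, ← Finset.smul_sum, ← hT]
  have hpos : (0 : ℝ) < ∏ i, ((κ i).factorial : ℝ) :=
    Finset.prod_pos fun i _ => by exact_mod_cast (κ i).factorial_pos
  have hTfeq : T f = (∏ i, ((κ i).factorial : ℝ))⁻¹ •
      aeval ph (Eop uv wv κ (List.finRange n) (rename Sum.inl Sym * rename Sum.inr f)) := by
    rw [hkey, inv_smul_smul₀ hpos.ne']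
  rw [hTfeq]
  exact V.mem_smul (inv_pos.2 hpos) hsubst
end

section
/- Let n, m ∈ ℕ, κ ∈ ℕⁿ, and let T be a linear operator from ℝ_κ[w₁,…,wₙ] to real polynomials in variables w'₁,…,w'_m. Let f = Σ_{0≤α≤κ} c_α v^α ∈ ℝ_κ[v₁,…,vₙ] and let D = Σ_{0≤γ≤κ} ∂_u^{κ−γ} ∂_v^{γ}. Then, regarding Sym_T(w',u)·f(v) as a polynomial in the variables w', u, v and evaluating at u = v = 0: D( Sym_T(w',u) · f(v) )|_{u=v=0} = κ! · T(f), an identity of polynomials in w'₁,…,w'_m. -/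
open MvPolynomial Finset

/-- The composition of iterated partial derivatives `∂^β = ∏ i, ∂_{x i}^{β i}`. -/
noncomputable def pdMulti {σ : Type} [Fintype σ] [DecidableEq σ] (β : σ → ℕ) :
    Module.End ℝ (MvPolynomial σ ℝ) :=
  (Finset.univ.toList.map
    (fun i => ((pderiv i).toLinearMap : Module.End ℝ (MvPolynomial σ ℝ)) ^ β i)).prod

lemma pderiv_pow_monomial {σ : Type} [DecidableEq σ] (i : σ) (k : ℕ) (a : σ →₀ ℕ) (r : ℝ) :
    (((pderiv i).toLinearMap : Module.End ℝ (MvPolynomial σ ℝ)) ^ k) (monomial a r) =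
      monomial (a - Finsupp.single i k) (r * (a i).descFactorial k) := by
  induction k with
  | zero => simp
  | succ k ih =>
    rw [pow_succ', Module.End.mul_apply, ih]
    rw [show ((pderiv i).toLinearMap : MvPolynomial σ ℝ →ₗ[ℝ] MvPolynomial σ ℝ) (monomial (a - Finsupp.single i k) (r * ((a i).descFactorial k : ℝ))) = pderiv i (monomial (a - Finsupp.single i k) (r * ((a i).descFactorial k : ℝ))) from rfl, pderiv_monomial]
    congr 1
    · rw [tsub_tsub, ← Finsupp.single_add]
    · rw [Finsupp.coe_tsub, Pi.sub_apply, Finsupp.single_apply, if_pos rfl,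
        Nat.descFactorial_succ]
      push_cast
      ring

lemma list_pd_monomial {σ : Type} [Fintype σ] [DecidableEq σ] (β : σ → ℕ) (r : ℝ) :
    ∀ (l : List σ), l.Nodup → ∀ (a : σ →₀ ℕ),
      ((l.map (fun i => ((pderiv i).toLinearMap : Module.End ℝ (MvPolynomial σ ℝ)) ^ β i)).prod)
          (monomial a r) =
        monomial (a - ∑ i ∈ l.toFinset, Finsupp.single i (β i))
          (r * ∏ i ∈ l.toFinset, ((a i).descFactorial (β i) : ℝ)) := by
  intro l
  induction l with
  | nil => intro _ a; simp
  | cons hd tl ih =>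
    intro hnd a
    have hhd : hd ∉ tl := (List.nodup_cons.mp hnd).1
    have htl : tl.Nodup := (List.nodup_cons.mp hnd).2
    rw [List.map_cons, List.prod_cons, Module.End.mul_apply, ih htl a, pderiv_pow_monomial]
    have hfs : (hd :: tl).toFinset = insert hd tl.toFinset := by simp
    have hnm : hd ∉ tl.toFinset := by simpa using hhd
    rw [hfs, Finset.sum_insert hnm, Finset.prod_insert hnm]
    congr 1
    · rw [tsub_tsub, add_comm]
    · have hval : (a - ∑ i ∈ tl.toFinset, Finsupp.single i (β i)) hd = a hd := by
        rw [Finsupp.coe_tsub, Pi.sub_apply]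
        have : (∑ i ∈ tl.toFinset, Finsupp.single i (β i)) hd = 0 := by
          rw [Finsupp.finset_sum_apply]
          refine Finset.sum_eq_zero fun i hi => ?_
          rw [Finsupp.single_apply, if_neg]
          rintro rfl; exact hnm hi
        rw [this, Nat.sub_zero]
      rw [hval]
      push_cast
      ring

lemma pdMulti_monomial {σ : Type} [Fintype σ] [DecidableEq σ] (β : σ → ℕ) (a : σ →₀ ℕ) (r : ℝ) :
    pdMulti β (monomial a r) =
      monomial (a - ∑ i, Finsupp.single i (β i))
        (r * ∏ i, ((a i).descFactorial (β i) : ℝ)) := by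
  rw [pdMulti, list_pd_monomial β r _ (Finset.nodup_toList _) a, Finset.toList_toFinset]

lemma sum_single_apply {σ : Type} [Fintype σ] [DecidableEq σ] (f : σ → ℕ) (j : σ) :
    (∑ i, Finsupp.single i (f i)) j = f j := by
  rw [Finsupp.finset_sum_apply]
  simp [Finsupp.single_apply]

lemma prod_X_pow_finset {σ τ : Type} [DecidableEq σ] [DecidableEq τ] (s : Finset τ)
    (g : τ → σ) (f : τ → ℕ) :
    (∏ i ∈ s, (X (g i) : MvPolynomial σ ℝ) ^ f i) =
      monomial (∑ i ∈ s, Finsupp.single (g i) (f i)) 1 := by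
  induction s using Finset.induction_on with
  | empty => simp
  | @insert a s ha ih =>
    rw [Finset.prod_insert ha, Finset.sum_insert ha, ih, X_pow_eq_monomial, monomial_mul, mul_one]

lemma key_eval {σ₁ σ₂ : Type} [Fintype σ₁] [DecidableEq σ₁] [Fintype σ₂] [DecidableEq σ₂]
    (δ b : σ₂ → ℕ) (q : MvPolynomial σ₁ ℝ) :
    aeval (Sum.elim (fun j => (X j : MvPolynomial σ₁ ℝ)) (fun _ => 0))
      (pdMulti (Sum.elim (fun _ => 0) δ : σ₁ ⊕ σ₂ → ℕ)
        (rename Sum.inl q * ∏ j, (X (Sum.inr j) : MvPolynomial (σ₁ ⊕ σ₂) ℝ) ^ b j))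
      = (if b = δ then (∏ j, ((δ j).factorial : ℝ)) else 0) • q := by
  induction q using MvPolynomial.induction_on' with
  | add p q hp hq =>
    rw [map_add, add_mul, map_add, map_add, hp, hq, smul_add]
  | monomial u s =>
    -- second factor as a monomial on the inr variables
    have hprod : (∏ j, (X (Sum.inr j) : MvPolynomial (σ₁ ⊕ σ₂) ℝ) ^ b j) =
        monomial (∑ j, Finsupp.single (Sum.inr j : σ₁ ⊕ σ₂) (b j)) 1 := by
      rw [prod_X_pow_finset univ Sum.inr b]
    rw [hprod, rename_monomial, monomial_mul, mul_one, pdMulti_monomial, aeval_monomial]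
    set A : (σ₁ ⊕ σ₂) →₀ ℕ :=
      Finsupp.mapDomain Sum.inl u + ∑ j, Finsupp.single (Sum.inr j : σ₁ ⊕ σ₂) (b j) with hA
    set Δ : (σ₁ ⊕ σ₂) →₀ ℕ :=
      ∑ i, Finsupp.single i ((Sum.elim (fun _ => 0) δ : σ₁ ⊕ σ₂ → ℕ) i) with hΔ
    have hAl : ∀ j : σ₁, A (Sum.inl j) = u j := by
      intro j
      rw [hA, Finsupp.add_apply, Finsupp.mapDomain_apply Sum.inl_injective]
      have : (∑ j, Finsupp.single (Sum.inr j : σ₁ ⊕ σ₂) (b j)) (Sum.inl j) = 0 := by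
        rw [Finsupp.finset_sum_apply]
        exact Finset.sum_eq_zero fun i _ => by simp [Finsupp.single_apply]
      omega
    have hAr : ∀ j : σ₂, A (Sum.inr j) = b j := by
      intro j
      rw [hA, Finsupp.add_apply, Finsupp.mapDomain_notin_range]
      · have : (∑ i, Finsupp.single (Sum.inr i : σ₁ ⊕ σ₂) (b i)) (Sum.inr j) = b j := by
          rw [Finsupp.finset_sum_apply]
          simp [Finsupp.single_apply, Sum.inr.injEq]
        omega
      · rintro ⟨i, hi⟩; exact Sum.inl_ne_inr hi
    have hΔl : ∀ j : σ₁, Δ (Sum.inl j) = 0 := fun j => by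
      rw [hΔ, sum_single_apply]; rfl
    have hΔr : ∀ j : σ₂, Δ (Sum.inr j) = δ j := fun j => by
      rw [hΔ, sum_single_apply]; rfl
    have hΔl' : ∀ j : σ₁, Δ (Sum.inl j) = 0 := hΔl
    have hAΔl : ∀ j : σ₁, (A - Δ) (Sum.inl j) = u j := by
      intro j
      rw [Finsupp.coe_tsub, Pi.sub_apply, hAl, hΔl, Nat.sub_zero]
    have hAΔr : ∀ j : σ₂, (A - Δ) (Sum.inr j) = b j - δ j := by
      intro j
      rw [Finsupp.coe_tsub, Pi.sub_apply, hAr, hΔr]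
    -- coefficient
    have hcoef : (∏ i, (((A i).descFactorial ((Sum.elim (fun _ => 0) δ : σ₁ ⊕ σ₂ → ℕ) i)) : ℝ))
        = ∏ j : σ₂, ((b j).descFactorial (δ j) : ℝ) := by
      rw [Fintype.prod_sum_type]
      simp [hAl, hAr]
    have hsplit : ((A - Δ).prod fun i k =>
          (Sum.elim (fun j => (X j : MvPolynomial σ₁ ℝ)) (fun _ => 0)) i ^ k)
        = (∏ j : σ₁, (X j : MvPolynomial σ₁ ℝ) ^ u j) *
            ∏ j : σ₂, (0 : MvPolynomial σ₁ ℝ) ^ (b j - δ j) := by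
      rw [Finsupp.prod_fintype _ _ (fun i => pow_zero _), Fintype.prod_sum_type]
      congr 1
      · exact Finset.prod_congr rfl fun j _ => by rw [hAΔl j]; rfl
      · exact Finset.prod_congr rfl fun j _ => by rw [hAΔr j]; rfl
    rw [hsplit, hcoef]
    by_cases hbδ : b = δ
    · subst hbδ
      rw [if_pos rfl]
      have h1 : (∏ j : σ₂, (0 : MvPolynomial σ₁ ℝ) ^ (b j - b j)) = 1 := by
        refine Finset.prod_eq_one fun j _ => ?_
        rw [Nat.sub_self, pow_zero]
      have h3 : (∏ j : σ₂, ((b j).descFactorial (b j) : ℝ)) = ∏ j : σ₂, ((b j).factorial : ℝ) := by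
        simp [Nat.descFactorial_self]
      rw [h1, mul_one, h3]
      rw [show (monomial u s : MvPolynomial σ₁ ℝ) = C s * ∏ j, X j ^ u j by
        rw [monomial_eq, Finsupp.prod_fintype _ _ (fun i => pow_zero _)]]
      rw [smul_eq_C_mul, algebraMap_eq, map_mul]
      ring
    · rw [if_neg hbδ, zero_smul]
      have hex : ∃ j, b j ≠ δ j := by
        by_contra h
        push_neg at h
        exact hbδ (funext h)
      obtain ⟨j, hj⟩ := hex
      rcases Nat.lt_or_ge (b j) (δ j) with hlt | hge
      · have h0 : ((b j).descFactorial (δ j) : ℝ) = 0 := by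
          rw [Nat.descFactorial_eq_zero_iff_lt.mpr hlt, Nat.cast_zero]
        rw [Finset.prod_eq_zero (Finset.mem_univ j) h0, mul_zero, map_zero, zero_mul]
      · have hlt' : δ j < b j := lt_of_le_of_ne hge (Ne.symm hj)
        have h0 : (0 : MvPolynomial σ₁ ℝ) ^ (b j - δ j) = 0 := zero_pow (by omega)
        rw [Finset.prod_eq_zero (f := fun j => (0 : MvPolynomial σ₁ ℝ) ^ (b j - δ j)) (Finset.mem_univ j) h0, mul_zero, mul_zero]

/-- Let `T` be a linear operator from `ℝ_κ[w₁,…,wₙ]` to polynomials in `w'₁,…,w'_m`, let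
`f = Σ_{0≤α≤κ} c_α v^α` and `D = Σ_{0≤γ≤κ} ∂_u^{κ−γ} ∂_v^γ`.  Regarding
`Sym_T(w',u) ⬝ f(v)` as a polynomial in the variables `w'` (`Sum.inl`), `u` (`Sum.inr ∘ Sum.inl`)
and `v` (`Sum.inr ∘ Sum.inr`), applying `D` and evaluating at `u = v = 0` yields `κ! ⬝ T(f)`. -/
theorem D_of_symbol_recovers_T (n m : ℕ) (κ : Fin n → ℕ)
    (T : MvPolynomial (Fin n) ℝ →ₗ[ℝ] MvPolynomial (Fin m) ℝ)
    (c : (Fin n → ℕ) → ℝ) :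
    aeval
      (Sum.elim (fun j => (X j : MvPolynomial (Fin m) ℝ)) (fun _ => 0))
      ((∑ γ ∈ Finset.Iic κ,
          pdMulti (Sum.elim (fun _ => 0) (Sum.elim (fun i => κ i - γ i) γ) : Fin m ⊕ (Fin n ⊕ Fin n) → ℕ))
        (rename (Sum.map id Sum.inl)
            (∑ α ∈ Finset.Iic κ, (∏ i, ((κ i).choose (α i) : ℝ)) •
              (rename Sum.inl (T (∏ i, X i ^ α i)) *
                ∏ i, (X (Sum.inr i) : MvPolynomial (Fin m ⊕ Fin n) ℝ) ^ (κ i - α i))) *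
          rename (fun i => Sum.inr (Sum.inr i))
            (∑ β ∈ Finset.Iic κ, C (c β) * ∏ i, X i ^ β i)))
      = (∏ i, ((κ i).factorial : ℝ)) • T (∑ β ∈ Finset.Iic κ, C (c β) * ∏ i, X i ^ β i) := by
  classical
  -- Step 1: simplify the two renamed factors
  have hP : rename (Sum.map id Sum.inl)
        (∑ α ∈ Finset.Iic κ, (∏ i, ((κ i).choose (α i) : ℝ)) •
          (rename Sum.inl (T (∏ i, X i ^ α i)) *
            ∏ i, (X (Sum.inr i) : MvPolynomial (Fin m ⊕ Fin n) ℝ) ^ (κ i - α i)))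
      = ∑ α ∈ Finset.Iic κ, (∏ i, ((κ i).choose (α i) : ℝ)) •
          (rename (Sum.inl : Fin m → Fin m ⊕ (Fin n ⊕ Fin n)) (T (∏ i, X i ^ α i)) *
            ∏ i, (X (Sum.inr (Sum.inl i)) : MvPolynomial (Fin m ⊕ (Fin n ⊕ Fin n)) ℝ) ^ (κ i - α i)) := by
    rw [map_sum]
    refine Finset.sum_congr rfl fun α _ => ?_
    rw [map_smul, map_mul, rename_rename,
      show (Sum.map id Sum.inl ∘ (Sum.inl : Fin m → Fin m ⊕ Fin n)) =
        (Sum.inl : Fin m → Fin m ⊕ (Fin n ⊕ Fin n)) from funext fun x => rfl,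
      map_prod (rename (Sum.map id Sum.inl)) (fun i => (X (Sum.inr i) : MvPolynomial (Fin m ⊕ Fin n) ℝ) ^ (κ i - α i)) univ]
    simp only [map_pow, rename_X]
    rfl
  have hQ : rename (fun i => (Sum.inr (Sum.inr i) : Fin m ⊕ (Fin n ⊕ Fin n)))
        (∑ β ∈ Finset.Iic κ, C (c β) * ∏ i, X i ^ β i)
      = ∑ β ∈ Finset.Iic κ, c β •
          ∏ i, (X (Sum.inr (Sum.inr i)) : MvPolynomial (Fin m ⊕ (Fin n ⊕ Fin n)) ℝ) ^ β i := by
    rw [map_sum]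
    refine Finset.sum_congr rfl fun β _ => ?_
    rw [map_mul, rename_C, ← smul_eq_C_mul,
      map_prod (rename fun i => (Sum.inr (Sum.inr i) : Fin m ⊕ (Fin n ⊕ Fin n))) (fun i => (X i : MvPolynomial (Fin n) ℝ) ^ β i) univ]
    simp only [map_pow, rename_X]
  rw [hP, hQ, Finset.sum_mul_sum]
  have hterm : ∀ α β : Fin n → ℕ,
      ((∏ i, ((κ i).choose (α i) : ℝ)) •
          (rename (Sum.inl : Fin m → Fin m ⊕ (Fin n ⊕ Fin n)) (T (∏ i, X i ^ α i)) *
            ∏ i, (X (Sum.inr (Sum.inl i)) : MvPolynomial (Fin m ⊕ (Fin n ⊕ Fin n)) ℝ) ^ (κ i - α i))) *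
        (c β • ∏ i, (X (Sum.inr (Sum.inr i)) : MvPolynomial (Fin m ⊕ (Fin n ⊕ Fin n)) ℝ) ^ β i)
      = ((∏ i, ((κ i).choose (α i) : ℝ)) * c β) •
          (rename (Sum.inl : Fin m → Fin m ⊕ (Fin n ⊕ Fin n)) (T (∏ i, X i ^ α i)) *
            ∏ j : Fin n ⊕ Fin n, (X (Sum.inr j) : MvPolynomial (Fin m ⊕ (Fin n ⊕ Fin n)) ℝ) ^
              (Sum.elim (fun i => κ i - α i) β j)) := by
    intro α β
    rw [smul_mul_smul_comm, mul_assoc,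
      Fintype.prod_sum_type (fun j => (X (Sum.inr j) : MvPolynomial (Fin m ⊕ (Fin n ⊕ Fin n)) ℝ) ^
        (Sum.elim (fun i => κ i - α i) β j))]
    rfl
  simp only [hterm]
  simp only [LinearMap.sum_apply, map_sum, map_smul]
  simp only [key_eval]
  rw [Finset.smul_sum]
  refine Finset.sum_congr rfl fun α hα => ?_
  have hα' : α ≤ κ := Finset.mem_Iic.mp hα
  rw [← smul_eq_C_mul, map_smul]
  -- inner γ-sum collapses
  have hinner : ∀ β ∈ Finset.Iic κ,
      (∑ γ ∈ Finset.Iic κ,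
        (if (Sum.elim (fun i => κ i - α i) β : Fin n ⊕ Fin n → ℕ)
            = Sum.elim (fun i => κ i - γ i) γ then
          ∏ j : Fin n ⊕ Fin n, ((Sum.elim (fun i => κ i - γ i) γ j).factorial : ℝ)
        else 0) • T (∏ i, X i ^ α i))
      = if β = α then
          (∏ j : Fin n ⊕ Fin n, ((Sum.elim (fun i => κ i - α i) α j).factorial : ℝ)) •
            T (∏ i, X i ^ α i)
        else 0 := by
    intro β hβ
    have hβ' : β ≤ κ := Finset.mem_Iic.mp hβ
    rw [Finset.sum_eq_single_of_mem β hβ]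
    · by_cases hβα : β = α
      · subst hβα
        rw [if_pos rfl, if_pos rfl]
      · rw [if_neg, if_neg hβα, zero_smul]
        intro h
        exact hβα (funext fun i => by
          have h1 := congrFun h (Sum.inl i)
          simp only [Sum.elim_inl] at h1
          have h2 : α i ≤ κ i := hα' i
          have h3 : β i ≤ κ i := hβ' i
          omega)
    · intro γ hγ hne
      rw [if_neg, zero_smul]
      intro h
      exact hne (funext fun i => by
        have h1 := congrFun h (Sum.inr i)
        simpa using h1.symm)
  rw [Finset.sum_congr rfl fun β hβ => by rw [hinner β hβ]]
  simp only [smul_ite, smul_zero]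
  rw [Finset.sum_ite_eq' (Finset.Iic κ) α, if_pos hα]
  have hN : (∏ j : Fin n ⊕ Fin n, ((Sum.elim (fun i => κ i - α i) α j).factorial : ℝ))
      = (∏ i, ((κ i - α i).factorial : ℝ)) * ∏ i, ((α i).factorial : ℝ) := by
    rw [Fintype.prod_sum_type]
    rfl
  have hfac : (∏ i, ((κ i).choose (α i) : ℝ)) *
      ((∏ i, ((κ i - α i).factorial : ℝ)) * (∏ i, ((α i).factorial : ℝ)))
      = ∏ i, ((κ i).factorial : ℝ) := by
    rw [← Finset.prod_mul_distrib, ← Finset.prod_mul_distrib]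
    refine Finset.prod_congr rfl fun i _ => ?_
    have h := Nat.choose_mul_factorial_mul_factorial (hα' i)
    norm_cast
    rw [← h]
    ring
  rw [smul_smul, smul_smul]
  rw [show (∏ i, ((κ i).choose (α i) : ℝ)) * c α *
      (∏ j : Fin n ⊕ Fin n, ((Sum.elim (fun i => κ i - α i) α j).factorial : ℝ))
      = (∏ i, ((κ i).factorial : ℝ)) * c α from by rw [hN]; linear_combination (c α) * hfac]
end

section
/- Let n ≥ 2 and κ ∈ ℕⁿ. Let T : ℝ_κ[w₁,…,wₙ] → ℝ[w₁,w₃,…,wₙ] be the diagonalisation operator f(w₁,…,wₙ) ↦ f(w₁,w₁,w₃,…,wₙ), and let S = N ∘ T ∘ N^{−1}. Then the symbol of S satisfies Sym_S(w,u) = κ₁!·κ₂! · ∏_{i=3}^{n}(wᵢ+uᵢ)^{κᵢ} · Σ_{0≤α₁≤κ₁} Σ_{0≤α₂≤κ₂} ( w₁^{α₁+α₂}/(α₁+α₂)! ) · ( u₁^{κ₁−α₁}/(κ₁−α₁)! ) · ( u₂^{κ₂−α₂}/(κ₂−α₂)! ). -/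
open MvPolynomial Finset

noncomputable def normN {σ : Type} (p : MvPolynomial σ ℝ) : MvPolynomial σ ℝ :=
  ∑ ν ∈ p.support, monomial ν (coeff ν p / (ν.prod fun _ k => (k.factorial : ℝ)))

noncomputable def normNInv {σ : Type} (p : MvPolynomial σ ℝ) : MvPolynomial σ ℝ :=
  ∑ ν ∈ p.support, monomial ν ((ν.prod fun _ k => (k.factorial : ℝ)) * coeff ν p)

lemma normNInv_monomial {σ : Type} (ν : σ →₀ ℕ) (c : ℝ) :
    normNInv (monomial ν c) = monomial ν ((ν.prod fun _ k => (k.factorial : ℝ)) * c) := by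
  classical
  by_cases hc : c = 0
  · simp [normNInv, hc]
  · rw [normNInv, support_monomial, if_neg hc, Finset.sum_singleton, coeff_monomial, if_pos rfl]

lemma normN_monomial {σ : Type} (ν : σ →₀ ℕ) (c : ℝ) :
    normN (monomial ν c) = monomial ν (c / (ν.prod fun _ k => (k.factorial : ℝ))) := by
  classical
  by_cases hc : c = 0
  · simp [normN, hc]
  · rw [normN, support_monomial, if_neg hc, Finset.sum_singleton, coeff_monomial, if_pos rfl]

lemma prod_X_pow {n : ℕ} (α : Fin n → ℕ) :
    ∏ i, (X i : MvPolynomial (Fin n) ℝ) ^ α i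
      = monomial (Finsupp.equivFunOnFinite.symm α) 1 := by
  rw [monomial_eq, C_1, one_mul, Finsupp.prod_fintype]
  · simp
  · intro; exact pow_zero _

lemma prod_fact {n : ℕ} (α : Fin n → ℕ) :
    ((Finsupp.equivFunOnFinite.symm α).prod fun _ k => (k.factorial : ℝ))
      = ∏ i, ((α i).factorial : ℝ) := by
  rw [Finsupp.prod_fintype]
  · simp
  · intro; simp

lemma univ_decomp {n : ℕ} {M : Type*} [CommMonoid M] (i0 i1 : Fin n)
    (h0 : (i0 : ℕ) = 0) (h1 : (i1 : ℕ) = 1) (h : Fin n → M) :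
    ∏ i, h i = h i0 * h i1 * ∏ i ∈ univ.filter (fun i : Fin n => 2 ≤ (i : ℕ)), h i := by
  have huniv : (univ : Finset (Fin n))
      = insert i0 (insert i1 (univ.filter fun i : Fin n => 2 ≤ (i : ℕ))) := by
    ext i
    simp only [mem_univ, mem_insert, mem_filter, true_iff, true_and, Fin.ext_iff, h0, h1]
    omega
  have hmem1 : i1 ∉ univ.filter (fun i : Fin n => 2 ≤ (i : ℕ)) := by
    simp [h1]
  have hmem0 : i0 ∉ insert i1 (univ.filter fun i : Fin n => 2 ≤ (i : ℕ)) := by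
    simp [Fin.ext_iff, h0, h1]
  conv_lhs => rw [huniv]
  rw [prod_insert hmem0, prod_insert hmem1, mul_assoc]

lemma term_eval {n : ℕ} (i0 i1 : Fin n) (h0 : (i0 : ℕ) = 0) (h1 : (i1 : ℕ) = 1)
    (α : Fin n → ℕ) :
    rename (Sum.inl : Fin n → Fin n ⊕ Fin n)
        (normN (aeval (fun i : Fin n => if i = i1 then X i0 else X i)
          (normNInv (∏ i, (X i : MvPolynomial (Fin n) ℝ) ^ α i))))
      = C ((((α i0).factorial : ℝ) * ((α i1).factorial : ℝ)) / ((α i0 + α i1).factorial : ℝ)) *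
          ((X (Sum.inl i0) : MvPolynomial (Fin n ⊕ Fin n) ℝ) ^ (α i0 + α i1) *
            ∏ i ∈ univ.filter (fun i : Fin n => 2 ≤ (i : ℕ)), (X (Sum.inl i)) ^ α i) := by
  classical
  have hne : i0 ≠ i1 := by simp [Fin.ext_iff, h0, h1]
  set β : Fin n → ℕ := fun i => if i = i0 then α i0 + α i1 else if i = i1 then 0 else α i with hβ
  have hβ0 : β i0 = α i0 + α i1 := by rw [hβ]; simp
  have hβ1 : β i1 = 0 := by rw [hβ]; simp [hne.symm]
  have hβ2 : ∀ i ∈ univ.filter (fun i : Fin n => 2 ≤ (i : ℕ)), β i = α i := by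
    intro i hi
    simp only [mem_filter, mem_univ, true_and] at hi
    have hi0 : i ≠ i0 := by intro h; rw [h, h0] at hi; omega
    have hi1 : i ≠ i1 := by intro h; rw [h, h1] at hi; omega
    rw [hβ]; simp [hi0, hi1]
  rw [prod_X_pow, normNInv_monomial, mul_one, prod_fact, aeval_monomial]
  have hsub : ((Finsupp.equivFunOnFinite.symm α).prod fun i k =>
      ((if i = i1 then X i0 else X i : MvPolynomial (Fin n) ℝ)) ^ k)
      = ∏ i, ((if i = i1 then X i0 else X i : MvPolynomial (Fin n) ℝ)) ^ α i := by
    rw [Finsupp.prod_fintype]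
    · simp
    · intro; exact pow_zero _
  rw [hsub]
  have hdiag : ∏ i, ((if i = i1 then X i0 else X i : MvPolynomial (Fin n) ℝ)) ^ α i
      = ∏ i, (X i : MvPolynomial (Fin n) ℝ) ^ β i := by
    rw [univ_decomp i0 i1 h0 h1, univ_decomp i0 i1 h0 h1 (fun i => X i ^ β i)]
    rw [if_neg hne, if_pos rfl]
    have hcongr : ∀ i ∈ univ.filter (fun i : Fin n => 2 ≤ (i : ℕ)),
        ((if i = i1 then X i0 else X i : MvPolynomial (Fin n) ℝ)) ^ α i = X i ^ β i := by
      intro i hi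
      simp only [mem_filter, mem_univ, true_and] at hi
      have hi0 : i ≠ i0 := by intro h; rw [h, h0] at hi; omega
      have hi1 : i ≠ i1 := by intro h; rw [h, h1] at hi; omega
      rw [if_neg hi1, hβ]
      simp [hi0, hi1]
    rw [Finset.prod_congr rfl hcongr, hβ0, hβ1, pow_add, pow_zero, mul_one]
  rw [hdiag, prod_X_pow, algebraMap_eq, C_mul_monomial, mul_one, normN_monomial, prod_fact,
    rename_monomial]
  rw [monomial_eq]
  have hmap : ((Finsupp.mapDomain Sum.inl (Finsupp.equivFunOnFinite.symm β)).prod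
        fun i k => (X i : MvPolynomial (Fin n ⊕ Fin n) ℝ) ^ k)
      = ∏ i, (X (Sum.inl i) : MvPolynomial (Fin n ⊕ Fin n) ℝ) ^ β i := by
    rw [Finsupp.prod_mapDomain_index_inj Sum.inl_injective, Finsupp.prod_fintype]
    · simp
    · intro; exact pow_zero _
  rw [hmap]
  -- decompose both the numerator/denominator products and the X product
  rw [univ_decomp i0 i1 h0 h1 (fun i => ((α i).factorial : ℝ)),
      univ_decomp i0 i1 h0 h1 (fun i => ((β i).factorial : ℝ)),
      univ_decomp i0 i1 h0 h1 (fun i => (X (Sum.inl i) : MvPolynomial (Fin n ⊕ Fin n) ℝ) ^ β i)]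
  rw [hβ0, hβ1, pow_zero, mul_one]
  have hprodβ : ∏ i ∈ univ.filter (fun i : Fin n => 2 ≤ (i : ℕ)), ((β i).factorial : ℝ)
      = ∏ i ∈ univ.filter (fun i : Fin n => 2 ≤ (i : ℕ)), ((α i).factorial : ℝ) :=
    Finset.prod_congr rfl fun i hi => by rw [hβ2 i hi]
  have hprodβX : ∏ i ∈ univ.filter (fun i : Fin n => 2 ≤ (i : ℕ)),
        (X (Sum.inl i) : MvPolynomial (Fin n ⊕ Fin n) ℝ) ^ β i
      = ∏ i ∈ univ.filter (fun i : Fin n => 2 ≤ (i : ℕ)),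
        (X (Sum.inl i) : MvPolynomial (Fin n ⊕ Fin n) ℝ) ^ α i :=
    Finset.prod_congr rfl fun i hi => by rw [hβ2 i hi]
  rw [hprodβ, hprodβX]
  have hR : (∏ i ∈ univ.filter (fun i : Fin n => 2 ≤ (i : ℕ)), ((α i).factorial : ℝ)) ≠ 0 := by
    apply Finset.prod_ne_zero_iff.mpr
    intro i _
    exact_mod_cast (Nat.factorial_pos _).ne'
  have hconst : (((α i0).factorial : ℝ) * ((α i1).factorial : ℝ) *
        ∏ i ∈ univ.filter (fun i : Fin n => 2 ≤ (i : ℕ)), ((α i).factorial : ℝ)) /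
        (((α i0 + α i1).factorial : ℝ) * ((Nat.factorial 0 : ℕ) : ℝ) *
        ∏ i ∈ univ.filter (fun i : Fin n => 2 ≤ (i : ℕ)), ((α i).factorial : ℝ))
      = (((α i0).factorial : ℝ) * ((α i1).factorial : ℝ)) / ((α i0 + α i1).factorial : ℝ) := by
    rw [Nat.factorial_zero, Nat.cast_one, mul_one, mul_div_mul_right _ _ hR]
  rw [hconst]

lemma fubini {n : ℕ} {R : Type*} [CommRing R] (i0 i1 : Fin n)
    (h0 : (i0 : ℕ) = 0) (h1 : (i1 : ℕ) = 1)
    (s : Fin n → Finset ℕ) (F : ℕ → ℕ → R) (G : Fin n → ℕ → R) :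
    ∑ α ∈ Fintype.piFinset s,
        F (α i0) (α i1) * ∏ i ∈ univ.filter (fun i : Fin n => 2 ≤ (i : ℕ)), G i (α i)
      = ∑ a ∈ s i0, ∑ b ∈ s i1,
          F a b * ∏ i ∈ univ.filter (fun i : Fin n => 2 ≤ (i : ℕ)), ∑ c ∈ s i, G i c := by
  classical
  have hne : i0 ≠ i1 := by simp [Fin.ext_iff, h0, h1]
  have hmaps : ∀ α ∈ Fintype.piFinset s, (fun α : Fin n → ℕ => (α i0, α i1)) α ∈ s i0 ×ˢ s i1 := by
    intro α hα
    simp only [Fintype.mem_piFinset] at hα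
    simp [hα i0, hα i1]
  rw [← Finset.sum_fiberwise_of_maps_to hmaps, Finset.sum_product]
  refine Finset.sum_congr rfl fun a ha => Finset.sum_congr rfl fun b hb => ?_
  -- inner sum
  set t : Fin n → Finset ℕ := fun i => if i = i0 then {a} else if i = i1 then {b} else s i with ht
  have hfilter : (Fintype.piFinset s).filter (fun α => (α i0, α i1) = (a, b))
      = Fintype.piFinset t := by
    ext α
    simp only [mem_filter, Fintype.mem_piFinset, Prod.mk.injEq, ht]
    constructor
    · rintro ⟨hall, hA, hB⟩ i
      by_cases hi0 : i = i0
      · subst hi0; simp [hA]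
      · by_cases hi1 : i = i1
        · subst hi1; simp [hi0, hB]
        · simp [hi0, hi1, hall i]
    · intro hall
      refine ⟨fun i => ?_, ?_, ?_⟩
      · have := hall i
        by_cases hi0 : i = i0
        · subst hi0; simp at this; simpa [this] using ha
        · by_cases hi1 : i = i1
          · subst hi1; simp [hne.symm] at this; simpa [this] using hb
          · simpa [hi0, hi1] using this
      · have := hall i0; simpa using this
      · have := hall i1; simpa [hne.symm] using this
  rw [hfilter]
  have hstep : ∀ α ∈ Fintype.piFinset t,
      F (α i0) (α i1) * ∏ i ∈ univ.filter (fun i : Fin n => 2 ≤ (i : ℕ)), G i (α i)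
        = F a b * ∏ i ∈ univ.filter (fun i : Fin n => 2 ≤ (i : ℕ)), G i (α i) := by
    intro α hα
    simp only [Fintype.mem_piFinset, ht] at hα
    have hA := hα i0; have hB := hα i1
    simp at hA
    simp [hne.symm] at hB
    rw [hA, hB]
  rw [Finset.sum_congr rfl hstep, ← Finset.mul_sum]
  congr 1
  -- now: ∑ α ∈ piFinset t, ∏_{i ≥ 2} G i (α i) = ∏_{i ≥ 2} ∑ c ∈ s i, G i c
  have key : ∀ α : Fin n → ℕ,
      ∏ i ∈ univ.filter (fun i : Fin n => 2 ≤ (i : ℕ)), G i (α i)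
        = ∏ i : Fin n, (if 2 ≤ (i : ℕ) then G i (α i) else 1) := by
    intro α
    rw [Finset.prod_filter]
  have key2 :
      ∏ i ∈ univ.filter (fun i : Fin n => 2 ≤ (i : ℕ)), (∑ c ∈ s i, G i c)
        = ∏ i, (∑ c ∈ t i, if 2 ≤ (i : ℕ) then G i c else 1) := by
    rw [Finset.prod_filter]
    refine Finset.prod_congr rfl fun i _ => ?_
    by_cases hi : 2 ≤ (i : ℕ)
    · have hi0 : i ≠ i0 := by intro h; rw [h, h0] at hi; omega
      have hi1 : i ≠ i1 := by intro h; rw [h, h1] at hi; omega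
      simp [ht, hi0, hi1, hi]
    · by_cases hii : i = i0
      · simp [ht, hii, hi, h0]
      · have : i = i1 := by
          have := i.isLt
          apply Fin.ext
          have hiv : (i : ℕ) = 0 ∨ (i : ℕ) = 1 := by omega
          rcases hiv with hv | hv
          · exact absurd (Fin.ext (by rw [hv, h0]) : i = i0) hii
          · rw [hv, h1]
        simp [ht, this, hne.symm, h1]
    
  simp only [key]
  rw [key2, Finset.prod_univ_sum]

/-- Let `n ≥ 2`, let `T : ℝ_κ[w₁,…,wₙ] → ℝ[w₁,w₃,…,wₙ]` be the diagonalisation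
`f(w₁,…,wₙ) ↦ f(w₁,w₁,w₃,…,wₙ)` (substituting `w₂ := w₁`), and let `S = N ∘ T ∘ N⁻¹`.
The symbol of `S` satisfies
`Sym_S(w,u) = κ₁! κ₂! ∏_{i≥3} (wᵢ+uᵢ)^{κᵢ} ⬝
  Σ_{0≤a₁≤κ₁} Σ_{0≤a₂≤κ₂} (w₁^{a₁+a₂}/(a₁+a₂)!) (u₁^{κ₁−a₁}/(κ₁−a₁)!) (u₂^{κ₂−a₂}/(κ₂−a₂)!)`
(`w = Sum.inl`, `u = Sum.inr`; the indices `w₁, w₂` are `0, 1 : Fin n`). -/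
theorem diagonalisation_symbol (n : ℕ) (hn : 2 ≤ n) (κ : Fin n → ℕ) :
    (∑ α ∈ Finset.Iic κ, (∏ i, ((κ i).choose (α i) : ℝ)) •
        (rename Sum.inl
            (normN (aeval
              (fun i : Fin n => if i = (⟨1, by omega⟩ : Fin n) then X ⟨0, by omega⟩ else X i)
              (normNInv (∏ i, (X i : MvPolynomial (Fin n) ℝ) ^ α i)))) *
          ∏ i, (X (Sum.inr i) : MvPolynomial (Fin n ⊕ Fin n) ℝ) ^ (κ i - α i)))
      = (((κ ⟨0, by omega⟩).factorial : ℝ) * ((κ ⟨1, by omega⟩).factorial : ℝ)) •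
          ((∏ i ∈ Finset.univ.filter (fun i : Fin n => 2 ≤ (i : ℕ)),
              (X (Sum.inl i) + X (Sum.inr i) : MvPolynomial (Fin n ⊕ Fin n) ℝ) ^ κ i) *
            ∑ a₁ ∈ Finset.range (κ ⟨0, by omega⟩ + 1), ∑ a₂ ∈ Finset.range (κ ⟨1, by omega⟩ + 1),
              ((1 / ((a₁ + a₂).factorial : ℝ)) * (1 / ((κ ⟨0, by omega⟩ - a₁).factorial : ℝ)) *
                  (1 / ((κ ⟨1, by omega⟩ - a₂).factorial : ℝ))) •
                ((X (Sum.inl ⟨0, by omega⟩) : MvPolynomial (Fin n ⊕ Fin n) ℝ) ^ (a₁ + a₂) *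
                  X (Sum.inr ⟨0, by omega⟩) ^ (κ ⟨0, by omega⟩ - a₁) *
                  X (Sum.inr ⟨1, by omega⟩) ^ (κ ⟨1, by omega⟩ - a₂))) := by
  classical
  have h0n : 0 < n := by omega
  have h1n : 1 < n := by omega
  set i0 : Fin n := ⟨0, h0n⟩ with hi0def
  set i1 : Fin n := ⟨1, h1n⟩ with hi1def
  set K : ℝ := ((κ i0).factorial : ℝ) * ((κ i1).factorial : ℝ) with hK
  set F : ℕ → ℕ → MvPolynomial (Fin n ⊕ Fin n) ℝ := fun a b =>
    C K * (C ((1 / ((a + b).factorial : ℝ)) * (1 / ((κ i0 - a).factorial : ℝ)) *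
              (1 / ((κ i1 - b).factorial : ℝ))) *
      ((X (Sum.inl i0) : MvPolynomial (Fin n ⊕ Fin n) ℝ) ^ (a + b) * X (Sum.inr i0) ^ (κ i0 - a) *
        X (Sum.inr i1) ^ (κ i1 - b))) with hF
  set G : Fin n → ℕ → MvPolynomial (Fin n ⊕ Fin n) ℝ := fun i c =>
    C (((κ i).choose c : ℝ)) * ((X (Sum.inl i) : MvPolynomial (Fin n ⊕ Fin n) ℝ) ^ c * X (Sum.inr i) ^ (κ i - c)) with hG
  have hIic : (Finset.Iic κ) = Fintype.piFinset (fun i => Finset.range (κ i + 1)) := by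
    ext γ
    simp [Fintype.mem_piFinset, Pi.le_def, Nat.lt_succ_iff]
  have hterm : ∀ α : Fin n → ℕ, α i0 ≤ κ i0 → α i1 ≤ κ i1 →
      (∏ i, ((κ i).choose (α i) : ℝ)) •
        (rename (Sum.inl : Fin n → Fin n ⊕ Fin n)
            (normN (aeval
              (fun i : Fin n => if i = i1 then X i0 else X i)
              (normNInv (∏ i, (X i : MvPolynomial (Fin n) ℝ) ^ α i)))) *
          ∏ i, (X (Sum.inr i) : MvPolynomial (Fin n ⊕ Fin n) ℝ) ^ (κ i - α i))
        = F (α i0) (α i1) * ∏ i ∈ univ.filter (fun i : Fin n => 2 ≤ (i : ℕ)), G i (α i) := by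
    intro α ha hb
    rw [term_eval i0 i1 rfl rfl α, smul_eq_C_mul,
      univ_decomp i0 i1 rfl rfl (fun i => ((κ i).choose (α i) : ℝ)),
      univ_decomp i0 i1 rfl rfl (fun i => (X (Sum.inr i) : MvPolynomial (Fin n ⊕ Fin n) ℝ) ^ (κ i - α i)),
      C_mul, C_mul, map_prod]
    have hGexp : ∏ i ∈ univ.filter (fun i : Fin n => 2 ≤ (i : ℕ)), G i (α i)
        = (∏ i ∈ univ.filter (fun i : Fin n => 2 ≤ (i : ℕ)), C (((κ i).choose (α i) : ℝ)) : MvPolynomial (Fin n ⊕ Fin n) ℝ) *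
          ((∏ i ∈ univ.filter (fun i : Fin n => 2 ≤ (i : ℕ)), (X (Sum.inl i) : MvPolynomial (Fin n ⊕ Fin n) ℝ) ^ α i) *
           ∏ i ∈ univ.filter (fun i : Fin n => 2 ≤ (i : ℕ)), (X (Sum.inr i) : MvPolynomial (Fin n ⊕ Fin n) ℝ) ^ (κ i - α i)) := by
      rw [hG, ← Finset.prod_mul_distrib, ← Finset.prod_mul_distrib]
    rw [hGexp, hF]
    have hscalar : (((κ i0).choose (α i0) : ℝ)) * (((κ i1).choose (α i1) : ℝ)) *
        (((α i0).factorial : ℝ) * ((α i1).factorial : ℝ) / ((α i0 + α i1).factorial : ℝ))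
        = K * ((1 / ((α i0 + α i1).factorial : ℝ)) * (1 / ((κ i0 - α i0).factorial : ℝ)) *
              (1 / ((κ i1 - α i1).factorial : ℝ))) := by
      rw [Nat.cast_choose ℝ ha, Nat.cast_choose ℝ hb, hK]
      have f1 : ((α i0).factorial : ℝ) ≠ 0 := Nat.cast_ne_zero.mpr (Nat.factorial_ne_zero _)
      have f2 : ((α i1).factorial : ℝ) ≠ 0 := Nat.cast_ne_zero.mpr (Nat.factorial_ne_zero _)
      have f3 : ((κ i0 - α i0).factorial : ℝ) ≠ 0 := Nat.cast_ne_zero.mpr (Nat.factorial_ne_zero _)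
      have f4 : ((κ i1 - α i1).factorial : ℝ) ≠ 0 := Nat.cast_ne_zero.mpr (Nat.factorial_ne_zero _)
      have f5 : ((α i0 + α i1).factorial : ℝ) ≠ 0 := Nat.cast_ne_zero.mpr (Nat.factorial_ne_zero _)
      field_simp
    have e1 : (C ((((κ i0).choose (α i0) : ℝ)) * (((κ i1).choose (α i1) : ℝ)) *
        (((α i0).factorial : ℝ) * ((α i1).factorial : ℝ) / ((α i0 + α i1).factorial : ℝ))) : MvPolynomial (Fin n ⊕ Fin n) ℝ)
        = C (((κ i0).choose (α i0) : ℝ)) * C (((κ i1).choose (α i1) : ℝ)) *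
          C (((α i0).factorial : ℝ) * ((α i1).factorial : ℝ) / ((α i0 + α i1).factorial : ℝ)) := by
      rw [map_mul, map_mul]
    have e2 : (C (K * ((1 / ((α i0 + α i1).factorial : ℝ)) * (1 / ((κ i0 - α i0).factorial : ℝ)) *
              (1 / ((κ i1 - α i1).factorial : ℝ)))) : MvPolynomial (Fin n ⊕ Fin n) ℝ)
        = C K * C ((1 / ((α i0 + α i1).factorial : ℝ)) * (1 / ((κ i0 - α i0).factorial : ℝ)) *
              (1 / ((κ i1 - α i1).factorial : ℝ))) := by
      rw [map_mul]
    have hC : (C (((κ i0).choose (α i0) : ℝ)) * C (((κ i1).choose (α i1) : ℝ)) *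
          C (((α i0).factorial : ℝ) * ((α i1).factorial : ℝ) / ((α i0 + α i1).factorial : ℝ)) : MvPolynomial (Fin n ⊕ Fin n) ℝ)
        = C K * C ((1 / ((α i0 + α i1).factorial : ℝ)) * (1 / ((κ i0 - α i0).factorial : ℝ)) *
              (1 / ((κ i1 - α i1).factorial : ℝ))) := by
      rw [← e1, ← e2, hscalar]
    linear_combination hC *
      ((X (Sum.inl i0) : MvPolynomial (Fin n ⊕ Fin n) ℝ) ^ (α i0 + α i1) * X (Sum.inr i0) ^ (κ i0 - α i0) *
        X (Sum.inr i1) ^ (κ i1 - α i1) *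
        (∏ i ∈ univ.filter (fun i : Fin n => 2 ≤ (i : ℕ)), C (((κ i).choose (α i) : ℝ)) : MvPolynomial (Fin n ⊕ Fin n) ℝ) *
        (∏ i ∈ univ.filter (fun i : Fin n => 2 ≤ (i : ℕ)), (X (Sum.inl i) : MvPolynomial (Fin n ⊕ Fin n) ℝ) ^ α i) *
        (∏ i ∈ univ.filter (fun i : Fin n => 2 ≤ (i : ℕ)), (X (Sum.inr i) : MvPolynomial (Fin n ⊕ Fin n) ℝ) ^ (κ i - α i)))
  calc
    (∑ α ∈ Finset.Iic κ, (∏ i, ((κ i).choose (α i) : ℝ)) •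
        (rename Sum.inl
            (normN (aeval
              (fun i : Fin n => if i = i1 then X i0 else X i)
              (normNInv (∏ i, (X i : MvPolynomial (Fin n) ℝ) ^ α i)))) *
          ∏ i, (X (Sum.inr i) : MvPolynomial (Fin n ⊕ Fin n) ℝ) ^ (κ i - α i)))
        = ∑ α ∈ Fintype.piFinset (fun i => Finset.range (κ i + 1)),
            F (α i0) (α i1) * ∏ i ∈ univ.filter (fun i : Fin n => 2 ≤ (i : ℕ)), G i (α i) := by
          rw [hIic]
          refine Finset.sum_congr rfl fun α hα => ?_
          simp only [Fintype.mem_piFinset, Finset.mem_range, Nat.lt_succ_iff] at hα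
          exact hterm α (hα i0) (hα i1)
    _ = ∑ a ∈ Finset.range (κ i0 + 1), ∑ b ∈ Finset.range (κ i1 + 1),
          F a b * ∏ i ∈ univ.filter (fun i : Fin n => 2 ≤ (i : ℕ)),
            ∑ c ∈ Finset.range (κ i + 1), G i c :=
        fubini i0 i1 rfl rfl _ F G
    _ = ∑ a ∈ Finset.range (κ i0 + 1), ∑ b ∈ Finset.range (κ i1 + 1),
          F a b * ∏ i ∈ univ.filter (fun i : Fin n => 2 ≤ (i : ℕ)),
            ((X (Sum.inl i) : MvPolynomial (Fin n ⊕ Fin n) ℝ) + X (Sum.inr i)) ^ κ i := by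
        refine Finset.sum_congr rfl fun a _ => Finset.sum_congr rfl fun b _ => ?_
        congr 1
        refine Finset.prod_congr rfl fun i _ => ?_
        rw [add_pow]
        refine (Finset.sum_congr rfl fun c _ => ?_).symm
        simp only [hG]
        rw [C_eq_coe_nat]
        ring
    _ = (((κ i0).factorial : ℝ) * ((κ i1).factorial : ℝ)) •
          ((∏ i ∈ Finset.univ.filter (fun i : Fin n => 2 ≤ (i : ℕ)),
              ((X (Sum.inl i) : MvPolynomial (Fin n ⊕ Fin n) ℝ) + X (Sum.inr i)) ^ κ i) *
            ∑ a₁ ∈ Finset.range (κ i0 + 1), ∑ a₂ ∈ Finset.range (κ i1 + 1),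
              ((1 / ((a₁ + a₂).factorial : ℝ)) * (1 / ((κ i0 - a₁).factorial : ℝ)) *
                  (1 / ((κ i1 - a₂).factorial : ℝ))) •
                ((X (Sum.inl i0) : MvPolynomial (Fin n ⊕ Fin n) ℝ) ^ (a₁ + a₂) *
                  X (Sum.inr i0) ^ (κ i0 - a₁) *
                  X (Sum.inr i1) ^ (κ i1 - a₂))) := by
        simp only [hF, smul_eq_C_mul, one_div, Finset.mul_sum, hK]
        refine Finset.sum_congr rfl fun a _ => Finset.sum_congr rfl fun b _ => ?_
        ring
end

section
/- Let 𝒱 be a volume-like class of real multivariate polynomials which, in addition, contains for every k ∈ ℕ the bivariate polynomial Σ_{a=0}^{k} binom(k,a) (w^{a}/a!) u^{k−a}. Then for every n and every κ ∈ ℕⁿ, the normalisation operator N maps 𝒱 ∩ ℝ_κ[w₁,…,wₙ] into 𝒱: if f ∈ ℝ_κ[w₁,…,wₙ] is homogeneous and lies in 𝒱, then N(f) lies in 𝒱. -/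
open MvPolynomial Finset

set_option linter.unusedSectionVars false

namespace NormAux

variable {σ : Type} [Fintype σ] [DecidableEq σ]

/-- Normalisation in a single variable. -/
noncomputable def stepN (v : σ) (p : MvPolynomial σ ℝ) : MvPolynomial σ ℝ :=
  ∑ ν ∈ p.support, monomial ν (coeff ν p / ((ν v).factorial : ℝ))

lemma coeff_stepN (v : σ) (p : MvPolynomial σ ℝ) (μ : σ →₀ ℕ) :
    coeff μ (stepN v p) = coeff μ p / ((μ v).factorial : ℝ) := by
  rw [stepN, coeff_sum]
  simp only [coeff_monomial, Finset.sum_ite_eq' p.support μ]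
  by_cases h : μ ∈ p.support
  · simp [h]
  · simp [h, MvPolynomial.notMem_support_iff.mp h]

/-- Normalisation in a set of variables. -/
noncomputable def partN (S : Finset σ) (p : MvPolynomial σ ℝ) : MvPolynomial σ ℝ :=
  ∑ ν ∈ p.support, monomial ν (coeff ν p / ∏ v ∈ S, ((ν v).factorial : ℝ))

lemma coeff_partN (S : Finset σ) (p : MvPolynomial σ ℝ) (μ : σ →₀ ℕ) :
    coeff μ (partN S p) = coeff μ p / ∏ v ∈ S, ((μ v).factorial : ℝ) := by
  rw [partN, coeff_sum]
  simp only [coeff_monomial, Finset.sum_ite_eq' p.support μ]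
  by_cases h : μ ∈ p.support
  · simp [h]
  · simp [h, MvPolynomial.notMem_support_iff.mp h]

lemma partN_empty (p : MvPolynomial σ ℝ) : partN ∅ p = p := by
  ext μ; simp [coeff_partN]

lemma partN_insert {v : σ} {S : Finset σ} (hv : v ∉ S) (p : MvPolynomial σ ℝ) :
    partN (insert v S) p = stepN v (partN S p) := by
  ext μ
  rw [coeff_stepN, coeff_partN, coeff_partN, Finset.prod_insert hv, div_div]
  ring

lemma normN_eq_partN (p : MvPolynomial σ ℝ) : normN p = partN Finset.univ p := by
  unfold normN partN
  refine Finset.sum_congr rfl fun ν _ => ?_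
  rw [Finsupp.prod_fintype _ _ (fun i => by simp)]

lemma stepN_monomial (v : σ) (ν : σ →₀ ℕ) (c : ℝ) :
    stepN v (monomial ν c) = monomial ν (c / ((ν v).factorial : ℝ)) := by
  ext μ
  rw [coeff_stepN, coeff_monomial, coeff_monomial]
  by_cases h : ν = μ
  · subst h; simp
  · simp [h]

lemma stepN_sum {ι : Type*} (v : σ) (s : Finset ι) (g : ι → MvPolynomial σ ℝ) :
    stepN v (∑ x ∈ s, g x) = ∑ x ∈ s, stepN v (g x) := by
  ext μ
  simp [coeff_stepN, coeff_sum, Finset.sum_div]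

lemma nat_desc (n j : ℕ) : n * (n - 1).descFactorial j = n.descFactorial (j + 1) := by
  cases n with
  | zero => simp
  | succ n => simpa using (Nat.succ_descFactorial_succ n j).symm

lemma pow_pderiv_monomial {τ : Type} [DecidableEq τ] (u : τ) (j : ℕ) (μ : τ →₀ ℕ) (b : ℝ) :
    (((pderiv u).toLinearMap : Module.End ℝ (MvPolynomial τ ℝ)) ^ j) (monomial μ b)
      = monomial (μ - Finsupp.single u j) (b * ((μ u).descFactorial j : ℝ)) := by
  induction j generalizing μ b with
  | zero => simp
  | succ j ih =>
      rw [pow_succ, Module.End.mul_apply]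
      simp only [Derivation.coeFn_coe]
      rw [pderiv_monomial, ih]
      congr 1
      · rw [tsub_tsub, ← Finsupp.single_add, add_comm]
      · rw [Finsupp.tsub_apply, Finsupp.single_eq_same, mul_assoc]
        congr 1
        rw [← Nat.cast_mul, nat_desc]

/-- The bivariate helper polynomial. -/
noncomputable def P (k : ℕ) : MvPolynomial (Fin 2) ℝ :=
  ∑ a ∈ Finset.range (k + 1),
    ((k.choose a : ℝ) / (a.factorial : ℝ)) • ((X 0 : MvPolynomial (Fin 2) ℝ) ^ a * X 1 ^ (k - a))

/-- The substitution map. -/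
noncomputable def φ (v : σ) : σ ⊕ Fin 2 → MvPolynomial σ ℝ :=
  Sum.elim (fun w => if w = v then 0 else X w) (fun t => if t = 0 then X v else 0)

def hmap (v : σ) : σ ⊕ Fin 2 → σ := Sum.elim id (fun _ => v)

lemma aeval_φ_good (v : σ) (μ : σ ⊕ Fin 2 →₀ ℕ) (b : ℝ)
    (h1 : μ (Sum.inl v) = 0) (h2 : μ (Sum.inr 1) = 0) :
    aeval (φ v) (monomial μ b) = monomial (Finsupp.mapDomain (hmap v) μ) b := by
  rw [aeval_monomial, monomial_eq]
  congr 1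
  rw [Finsupp.prod_mapDomain_index (fun i => by simp) (fun i m1 m2 => pow_add _ _ _)]
  apply Finsupp.prod_congr
  intro i hi
  rcases i with w | t
  · have hw : w ≠ v := by
      rintro rfl
      exact Finsupp.mem_support_iff.mp hi h1
    simp [φ, hmap, hw]
  · have ht : t = 0 := by
      fin_cases t
      · rfl
      · exact absurd h2 (Finsupp.mem_support_iff.mp hi)
    subst ht
    simp [φ, hmap]

lemma aeval_φ_zero1 (v : σ) (μ : σ ⊕ Fin 2 →₀ ℕ) (b : ℝ) (h1 : μ (Sum.inl v) ≠ 0) :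
    aeval (φ v) (monomial μ b) = 0 := by
  rw [aeval_monomial]
  have : μ.prod (fun i k => φ v i ^ k) = 0 := by
    apply Finset.prod_eq_zero (Finsupp.mem_support_iff.mpr h1)
    simp [φ, zero_pow h1]
  rw [this, mul_zero]

lemma aeval_φ_zero2 (v : σ) (μ : σ ⊕ Fin 2 →₀ ℕ) (b : ℝ) (h2 : μ (Sum.inr 1) ≠ 0) :
    aeval (φ v) (monomial μ b) = 0 := by
  rw [aeval_monomial]
  have : μ.prod (fun i k => φ v i ^ k) = 0 := by
    apply Finset.prod_eq_zero (Finsupp.mem_support_iff.mpr h2)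
    have h : φ v (Sum.inr 1) = 0 := by simp [φ]
    simp [h, zero_pow h2]
  rw [this, mul_zero]

/-- The exponent of the tensor monomial. -/
noncomputable def M (κ : ℕ) (ν : σ →₀ ℕ) (a : ℕ) : σ ⊕ Fin 2 →₀ ℕ :=
  Finsupp.mapDomain Sum.inl ν + Finsupp.single (Sum.inr 0) a + Finsupp.single (Sum.inr 1) (κ - a)

lemma M_inl (κ : ℕ) (ν : σ →₀ ℕ) (a : ℕ) (w : σ) : M κ ν a (Sum.inl w) = ν w := by
  simp [M, Finsupp.mapDomain_apply Sum.inl_injective, Finsupp.single_apply]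

lemma M_inr1 (κ : ℕ) (ν : σ →₀ ℕ) (a : ℕ) : M κ ν a (Sum.inr 1) = κ - a := by
  have h : (Sum.inr 1 : σ ⊕ Fin 2) ∉ Set.range (Sum.inl : σ → σ ⊕ Fin 2) := by simp
  simp [M, Finsupp.mapDomain_notin_range _ _ h, Finsupp.single_apply]

/-- exponent after derivatives -/
noncomputable def E (v : σ) (κ : ℕ) (ν : σ →₀ ℕ) (a j : ℕ) : σ ⊕ Fin 2 →₀ ℕ :=
  M κ ν a - Finsupp.single (Sum.inr 1) (κ - j) - Finsupp.single (Sum.inl v) j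

lemma E_inl (v : σ) (κ : ℕ) (ν : σ →₀ ℕ) (a j : ℕ) : E v κ ν a j (Sum.inl v) = ν v - j := by
  simp [E, Finsupp.tsub_apply, Finsupp.single_apply, M_inl]

lemma E_inr1 (v : σ) (κ : ℕ) (ν : σ →₀ ℕ) (a j : ℕ) :
    E v κ ν a j (Sum.inr 1) = (κ - a) - (κ - j) := by
  simp [E, Finsupp.tsub_apply, Finsupp.single_apply, M_inr1]

lemma Msub_inl (v : σ) (κ : ℕ) (ν : σ →₀ ℕ) (a j : ℕ) :
    ((M κ ν a - Finsupp.single (Sum.inr 1) (κ - j) : σ ⊕ Fin 2 →₀ ℕ)) (Sum.inl v) = ν v := by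
  simp [Finsupp.tsub_apply, Finsupp.single_apply, M_inl]

lemma E_surv (v : σ) (κ : ℕ) (ν : σ →₀ ℕ) :
    E v κ ν (ν v) (ν v)
      = Finsupp.mapDomain Sum.inl (ν.erase v) + Finsupp.single (Sum.inr 0) (ν v) := by
  ext i
  rcases i with w | t
  · rw [E, M]
    simp only [Finsupp.tsub_apply, Finsupp.add_apply, Finsupp.single_apply,
      Finsupp.mapDomain_apply Sum.inl_injective, Finsupp.erase_apply,
      Sum.inr.injEq, Sum.inl.injEq]
    have h0 : ¬ (Sum.inr (0 : Fin 2) = Sum.inl w) := by simp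
    have h1 : ¬ (Sum.inr (1 : Fin 2) = Sum.inl w) := by simp
    rw [if_neg h0, if_neg h1]
    by_cases hw : w = v
    · subst hw; simp
    · rw [if_neg fun h => hw h.symm, if_neg hw]; omega
  · have hr : (Sum.inr t : σ ⊕ Fin 2) ∉ Set.range (Sum.inl : σ → σ ⊕ Fin 2) := by simp
    rw [E, M]
    simp only [Finsupp.tsub_apply, Finsupp.add_apply, Finsupp.single_apply,
      Finsupp.mapDomain_notin_range _ _ hr, Sum.inr.injEq, Sum.inl.injEq]
    have h2 : ¬ (Sum.inl v = Sum.inr t) := by simp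
    rw [if_neg h2]
    by_cases ht : (1 : Fin 2) = t
    · subst ht
      have h01 : ¬ ((0 : Fin 2) = 1) := by decide
      simp [h01]
    · simp [ht]

lemma mapDomain_E_surv (v : σ) (κ : ℕ) (ν : σ →₀ ℕ) :
    Finsupp.mapDomain (hmap v) (E v κ ν (ν v) (ν v)) = ν := by
  rw [E_surv, Finsupp.mapDomain_add, ← Finsupp.mapDomain_comp, Finsupp.mapDomain_single]
  have h1 : hmap v ∘ (Sum.inl : σ → σ ⊕ Fin 2) = id := rfl
  rw [h1, Finsupp.mapDomain_id]
  have h2 : hmap v (Sum.inr 0) = v := rfl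
  rw [h2, Finsupp.erase_add_single]

lemma tensor_eq (κ : ℕ) (ν : σ →₀ ℕ) (c : ℝ) :
    rename Sum.inl (monomial ν c) * rename Sum.inr (P κ)
      = ∑ a ∈ Finset.range (κ + 1),
          monomial (M κ ν a) (c * ((κ.choose a : ℝ) / (a.factorial : ℝ))) := by
  rw [P, map_sum, Finset.mul_sum]
  refine Finset.sum_congr rfl fun a _ => ?_
  rw [map_smul, map_mul, map_pow, map_pow, rename_X, rename_X, rename_monomial,
      X_pow_eq_monomial, X_pow_eq_monomial, monomial_mul, smul_monomial, smul_eq_mul,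
      monomial_mul, M, add_assoc]
  congr 1
  ring

lemma E_def (v : σ) (κ : ℕ) (ν : σ →₀ ℕ) (a j : ℕ) :
    M κ ν a - Finsupp.single (Sum.inr 1) (κ - j) - Finsupp.single (Sum.inl v) j
      = E v κ ν a j := rfl

lemma key_mono (v : σ) (κ : ℕ) (ν : σ →₀ ℕ) (c : ℝ) (hle : ν v ≤ κ) :
    aeval (φ v) ((∑ j ∈ Finset.range (κ + 1),
        ((pderiv (Sum.inl v)).toLinearMap : Module.End ℝ (MvPolynomial (σ ⊕ Fin 2) ℝ)) ^ j *
          ((pderiv (Sum.inr 1)).toLinearMap : Module.End ℝ (MvPolynomial (σ ⊕ Fin 2) ℝ)) ^ (κ - j))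
      (rename Sum.inl (monomial ν c) * rename Sum.inr (P κ)))
      = (κ.factorial : ℝ) • monomial ν (c / ((ν v).factorial : ℝ)) := by
  rw [tensor_eq, LinearMap.sum_apply]
  simp only [map_sum, Module.End.mul_apply, pow_pderiv_monomial, M_inr1, Msub_inl, E_def]
  have hmem : ν v ∈ Finset.range (κ + 1) := Finset.mem_range.mpr (Nat.lt_succ_of_le hle)
  rw [Finset.sum_eq_single_of_mem (ν v) hmem ?_]
  · rw [Finset.sum_eq_single_of_mem (ν v) hmem ?_]
    · rw [aeval_φ_good v _ _ (by rw [E_inl]; omega) (by rw [E_inr1]; omega), mapDomain_E_surv]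
      rw [smul_monomial, smul_eq_mul]
      congr 1
      rw [Nat.descFactorial_self, Nat.descFactorial_self]
      have hfact : ((κ.choose (ν v) * (ν v).factorial * (κ - ν v).factorial : ℕ) : ℝ)
          = (κ.factorial : ℝ) := by
        exact_mod_cast congrArg (Nat.cast (R := ℝ))
          (Nat.choose_mul_factorial_mul_factorial hle)
      push_cast at hfact ⊢
      have hν : ((ν v).factorial : ℝ) ≠ 0 := by positivity
      field_simp
      linear_combination c * hfact
    · intro a ha hane
      rcases lt_or_gt_of_ne hane with hlt | hgt
      · apply aeval_φ_zero2
        rw [E_inr1]; omega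
      · have ha' : a ≤ κ := Nat.lt_succ_iff.mp (Finset.mem_range.mp ha)
        have hz : (κ - a).descFactorial (κ - ν v) = 0 :=
          Nat.descFactorial_eq_zero_iff_lt.mpr (by omega)
        rw [hz]
        simp
  · intro j hj hjne
    apply Finset.sum_eq_zero
    intro a ha
    rcases lt_or_gt_of_ne hjne with hlt | hgt
    · apply aeval_φ_zero1
      rw [E_inl]; omega
    · have hz : (ν v).descFactorial j = 0 := Nat.descFactorial_eq_zero_iff_lt.mpr hgt
      rw [hz]
      simp

lemma key (v : σ) (κ : ℕ) (f : MvPolynomial σ ℝ) (hdeg : degreeOf v f ≤ κ) :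
    aeval (φ v) ((∑ j ∈ Finset.range (κ + 1),
        ((pderiv (Sum.inl v)).toLinearMap : Module.End ℝ (MvPolynomial (σ ⊕ Fin 2) ℝ)) ^ j *
          ((pderiv (Sum.inr 1)).toLinearMap : Module.End ℝ (MvPolynomial (σ ⊕ Fin 2) ℝ)) ^ (κ - j))
      (rename Sum.inl f * rename Sum.inr (P κ)))
      = (κ.factorial : ℝ) • stepN v f := by
  conv_lhs => rw [f.as_sum, map_sum, Finset.sum_mul, map_sum, map_sum]
  conv_rhs => rw [f.as_sum, stepN_sum, Finset.smul_sum]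
  exact Finset.sum_congr rfl fun ν hν => by
    rw [key_mono v κ ν _ (le_trans (monomial_le_degreeOf v hν) hdeg), stepN_monomial]

/-- The substitution matrix. -/
def A (v : σ) : σ ⊕ Fin 2 → σ → ℝ :=
  fun i j => Sum.elim (fun w => if w ≠ v ∧ j = w then 1 else 0)
    (fun t => if t = 0 ∧ j = v then 1 else 0) i

lemma A_nonneg (v : σ) : ∀ i j, 0 ≤ A v i j := by
  intro i j
  rcases i with w | t <;> simp only [A, Sum.elim_inl, Sum.elim_inr] <;> split_ifs <;> norm_num

lemma subst_eq_φ (v : σ) : (fun i => ∑ j, C (A v i j) * X j) = φ v := by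
  funext i
  rcases i with w | t
  · by_cases hw : w = v
    · subst hw
      simp [A, φ]
    · simp [A, φ, hw, apply_ite (C (σ := σ) (R := ℝ)), ite_mul, Finset.sum_ite_eq']
  · fin_cases t <;>
      simp [A, φ, apply_ite (C (σ := σ) (R := ℝ)), ite_mul, Finset.sum_ite_eq']

lemma mem_stepN (V : VolumeLikeClass)
    (hV : ∀ k : ℕ, V.Mem (∑ a ∈ Finset.range (k + 1),
      ((k.choose a : ℝ) / (a.factorial : ℝ)) •
        ((X 0 : MvPolynomial (Fin 2) ℝ) ^ a * X 1 ^ (k - a))))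
    (v : σ) (f : MvPolynomial σ ℝ) (hf : V.Mem f) : V.Mem (stepN v f) := by
  set κ := degreeOf v f with hκ
  have h1 : V.Mem (P κ) := hV κ
  have h2 := V.mem_mul_disjoint hf h1
  have h3 := V.mem_creationDeriv (Sum.inl v) (Sum.inr 1) (by simp) κ h2
  have h4 := V.mem_subst (A v) (A_nonneg v) h3
  rw [subst_eq_φ] at h4
  rw [key v κ f le_rfl] at h4
  have h5 := V.mem_smul (c := ((κ.factorial : ℝ))⁻¹) (by positivity) h4
  rwa [smul_smul, inv_mul_cancel₀ (by positivity), one_smul] at h5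

lemma mem_partN (V : VolumeLikeClass)
    (hV : ∀ k : ℕ, V.Mem (∑ a ∈ Finset.range (k + 1),
      ((k.choose a : ℝ) / (a.factorial : ℝ)) •
        ((X 0 : MvPolynomial (Fin 2) ℝ) ^ a * X 1 ^ (k - a))))
    (S : Finset σ) (f : MvPolynomial σ ℝ) (hf : V.Mem f) : V.Mem (partN S f) := by
  induction S using Finset.induction_on with
  | empty => rwa [partN_empty]
  | @insert v S hv ih =>
      rw [partN_insert hv]
      exact mem_stepN V hV v _ ih

end NormAux

/-- Let `𝒱` be a volume-like class which, in addition, contains for every `k ∈ ℕ` the bivariate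
polynomial `Σ_{a=0}^{k} binom(k,a) (w^a/a!) u^{k−a}` (in the two variables `0, 1 : Fin 2`).
Then for every `n` and `κ ∈ ℕⁿ`, the normalisation operator `N` maps `𝒱 ∩ ℝ_κ[w₁,…,wₙ]`
into `𝒱`: if `f ∈ ℝ_κ[w₁,…,wₙ]` is homogeneous and lies in `𝒱`, then `N(f)` lies in `𝒱`. -/
theorem normalisation_preserves (V : VolumeLikeClass)
    (hV : ∀ k : ℕ, V.Mem (∑ a ∈ Finset.range (k + 1),
      ((k.choose a : ℝ) / (a.factorial : ℝ)) •
        ((X 0 : MvPolynomial (Fin 2) ℝ) ^ a * X 1 ^ (k - a))))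
    (n : ℕ) (κ : Fin n → ℕ) (f : MvPolynomial (Fin n) ℝ) (d : ℕ)
    (hf : f.IsHomogeneous d) (hdeg : ∀ i, degreeOf i f ≤ κ i) (hfV : V.Mem f) :
    V.Mem (normN f) := by
  rw [NormAux.normN_eq_partN]
  exact NormAux.mem_partN V hV Finset.univ f hfV
end
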